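/- arXiv:1708.03237 — 6 statements merged into one kernel-verified Lean document; each statement's English description precedes it below -/
import Mathlib

section
/- Let G be a finite graph with v vertices, e non-loop edges and ℓ loops, and let 0 < p ≤ 1. Then the total variation distance between the law of the p-sampling S_p(G) and the law of the with-replacement p-sampling S̃_p(G) is at most 2e(p³ + 3p²/v + p/v²) + 2ℓ(p² + p/v) + p, and hence (using v ≥ max(√(2e), ℓ)) at most (2e·p² + 3√(2e)·p + 2ℓ·p + 4)·p. -/
open Filter Finset
open scoped Classical ENNReal

/-- A finite graph on vertex set `Fin n`, possibly with loops, without multiple edges. -/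
structure FinGraph where
  n : ℕ
  adj : Fin n → Fin n → Bool
  symm : ∀ i j, adj i j = adj j i

namespace FinGraph

/-- Number of vertices. -/
def v (G : FinGraph) : ℕ := G.n

/-- Number of non-loop edges. -/
def e (G : FinGraph) : ℕ :=
  ((univ : Finset (Fin G.n × Fin G.n)).filter
    (fun q => G.adj q.1 q.2 = true ∧ q.1 < q.2)).card

/-- Number of loops. -/
def loops (G : FinGraph) : ℕ :=
  ((univ : Finset (Fin G.n)).filter (fun i => G.adj i i = true)).card

/-- Degree of a vertex (number of neighbours via non-loop edges). -/
def deg (G : FinGraph) (i : Fin G.n) : ℕ :=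
  ((univ : Finset (Fin G.n)).filter (fun j => G.adj i j = true ∧ j ≠ i)).card

/-- A graph is loopless when no vertex is adjacent to itself. -/
def Loopless (G : FinGraph) : Prop := ∀ i, G.adj i i = false

/-- The induced subgraph on a set `S` of vertices. -/
def induce (G : FinGraph) (S : Finset (Fin G.n)) : FinGraph where
  n := S.card
  adj i j := G.adj (S.orderIsoOfFin rfl i).1 (S.orderIsoOfFin rfl j).1
  symm i j := G.symm _ _

/-- The graph obtained by discarding all isolated vertices (vertices in no edge,
loop or non-loop). -/
def core (G : FinGraph) : FinGraph :=
  G.induce ((univ : Finset (Fin G.n)).filter (fun i => ∃ j, G.adj i j = true))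

/-- Graph isomorphism. -/
def Iso (G H : FinGraph) : Prop :=
  ∃ eqv : Fin G.n ≃ Fin H.n, ∀ i j, G.adj i j = H.adj (eqv i) (eqv j)

/-- Average degree `d̄(G)`. -/
noncomputable def avgDeg (G : FinGraph) : ℝ :=
  (1 / (G.n : ℝ)) * ∑ i : Fin G.n, (G.deg i : ℝ)

/-- Square average degree `d²̄(G)`. -/
noncomputable def sqAvgDeg (G : FinGraph) : ℝ :=
  (1 / (G.n : ℝ)) * ∑ i : Fin G.n, (G.deg i : ℝ) ^ 2

/-- Edge density `ρ(G) = 2e(G)/v(G)²`. -/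
noncomputable def density (G : FinGraph) : ℝ :=
  2 * (G.e : ℝ) / (G.n : ℝ) ^ 2

end FinGraph

/-- Unlabeled finite graphs: isomorphism classes of finite graphs. -/
def UGraph := Quot FinGraph.Iso

/-- The isomorphism class of a finite graph. -/
def FinGraph.cls (G : FinGraph) : UGraph := Quot.mk _ G

/-- Probability that independent Bernoulli(min p 1) vertex selection picks exactly `S`. -/
noncomputable def sampleWeight (G : FinGraph) (p : ℝ) (S : Finset (Fin G.n)) : ℝ :=
  (min p 1) ^ S.card * (1 - min p 1) ^ (G.n - S.card)

/-- Law (pmf) of the `p`-sampling `S_p(G)`: keep each vertex independently with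
probability `min p 1`, take the induced subgraph, discard isolated vertices,
and pass to the isomorphism class. -/
noncomputable def pSampleLaw (G : FinGraph) (p : ℝ) : UGraph → ℝ := fun H =>
  ∑ S ∈ (univ : Finset (Fin G.n)).powerset,
    sampleWeight G p S * (if ((G.induce S).core).cls = H then 1 else 0)

/-- The graph on `Fin k` pulled back along a vertex sample `x`. -/
def seqGraph (G : FinGraph) (k : ℕ) (x : Fin k → Fin G.n) : FinGraph where
  n := k
  adj i j := G.adj (x i) (x j)
  symm i j := G.symm _ _

/-- Law (pmf) of the with-replacement `p`-sampling `S̃_p(G)`: draw `K ~ Poisson(p·v(G))`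
vertices uniformly with replacement, form the graph on `Fin K` in which `i, j` are joined
whenever `(x_i, x_j)` is an edge of `G`, discard isolated vertices, and pass to the
isomorphism class. -/
noncomputable def wrSampleLaw (G : FinGraph) (p : ℝ) : UGraph → ℝ := fun H =>
  ∑' k : ℕ,
    (Real.exp (-(p * (G.v : ℝ))) * (p * (G.v : ℝ)) ^ k / (Nat.factorial k : ℝ)) *
      ((((univ : Finset (Fin k → Fin G.n)).filter
          (fun x => ((seqGraph G k x).core).cls = H)).card : ℝ) / ((G.v : ℝ)) ^ k)

/-- Total variation distance `sup_A |P(A) − Q(A)|` between two pmf-style laws on a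
countable discrete space. -/
noncomputable def dTV {α : Type*} (f g : α → ℝ) : ℝ :=
  ⨆ A : Set α, |∑' x : A, (f x.1 - g x.1)|

/-- `∑_i d_i · 1[d_i > k·√(e(G))]`, the total degree of vertices of degree exceeding
`k·√(e(G))`. -/
noncomputable def tailDegSum (G : FinGraph) (k : ℝ) : ℝ :=
  ∑ i : Fin G.n,
    (if k * Real.sqrt (G.e : ℝ) < (G.deg i : ℝ) then (G.deg i : ℝ) else 0)

/-- A sequence of graphs is uniformly sampling regular. -/
def UniformlySamplingRegular (G : ℕ → FinGraph) : Prop :=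
  ∀ ε : ℝ, 0 < ε → ∃ k : ℝ, 0 < k ∧ ∀ j,
    (1 / ((G j).e : ℝ)) * tailDegSum (G j) k < ε

/-- `E[e(S_p(G)) · 1[e(S_p(G)) > M]]`, the tail expectation of the number of non-loop
edges of the `p`-sampled subgraph (discarding isolated vertices does not change it). -/
noncomputable def expEdgeTail (G : FinGraph) (p M : ℝ) : ℝ :=
  ∑ S ∈ (univ : Finset (Fin G.n)).powerset,
    sampleWeight G p S *
      (if M < ((G.induce S).e : ℝ) then ((G.induce S).e : ℝ) else 0)

/-- `E[e(S_p(G))]`, the expected number of non-loop edges of the `p`-sampled subgraph. -/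
noncomputable def expEdge (G : FinGraph) (p : ℝ) : ℝ :=
  ∑ S ∈ (univ : Finset (Fin G.n)).powerset,
    sampleWeight G p S * ((G.induce S).e : ℝ)

/-- Law (pmf on ℕ) of the number of non-loop edges of the `p`-sampled subgraph. -/
noncomputable def edgeLaw (G : FinGraph) (p : ℝ) (m : ℕ) : ℝ :=
  ∑ S ∈ (univ : Finset (Fin G.n)).powerset,
    sampleWeight G p S * (if (G.induce S).e = m then 1 else 0)

/-- Number of kept neighbours (via non-loop edges) of vertex `i` under the selection `S`. -/
def keptNbrCount (G : FinGraph) (S : Finset (Fin G.n)) (i : Fin G.n) : ℕ :=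
  ((univ : Finset (Fin G.n)).filter (fun j => G.adj i j = true ∧ j ≠ i ∧ j ∈ S)).card

/-- `Pr(D_i ≥ 2)`: the probability that vertex `i` is kept and has at least two kept
neighbours, under independent Bernoulli(min p 1) vertex selection. -/
noncomputable def probD2 (G : FinGraph) (p : ℝ) (i : Fin G.n) : ℝ :=
  ∑ S ∈ (univ : Finset (Fin G.n)).powerset,
    sampleWeight G p S * (if i ∈ S ∧ 2 ≤ keptNbrCount G S i then 1 else 0)

/-- Probability that some kept vertex has at least two kept neighbours. -/
noncomputable def probSomeD2 (G : FinGraph) (p : ℝ) : ℝ :=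
  ∑ S ∈ (univ : Finset (Fin G.n)).powerset,
    sampleWeight G p S * (if ∃ i ∈ S, 2 ≤ keptNbrCount G S i then 1 else 0)

/-- Number of isolated kept (non-loop) edges: both endpoints kept, and each endpoint has
exactly one kept neighbour. -/
def isoEdgeCount (G : FinGraph) (S : Finset (Fin G.n)) : ℕ :=
  ((univ : Finset (Fin G.n × Fin G.n)).filter (fun q =>
    G.adj q.1 q.2 = true ∧ q.1 < q.2 ∧ q.1 ∈ S ∧ q.2 ∈ S ∧
    keptNbrCount G S q.1 = 1 ∧ keptNbrCount G S q.2 = 1)).card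

/-!
Couple the two samplings vertex by vertex. Vertex `i` receives a pair `(kᵢ, Nᵢ)` with `kᵢ`
Bernoulli(p) and `Nᵢ` Poisson(p), coupled so that `Nᵢ ≥ 1` forces `kᵢ`; this is possible since
`P(Po(p) = 0) = e^{-p} ≥ 1 - p`. The kept vertices form the p-sampling. By Poissonization, the
multinomial counts of `Po(p·v)` uniform draws are i.i.d. Poisson(p), so the graph in which vertex
`i` is repeated `Nᵢ` times is the with-replacement sampling. Once isolated vertices are discarded
the two graphs agree unless some edge or loop has both ends kept and an end with `Nᵢ ≠ 1`, which
has probability at most `2e·p·p² + ℓ·p²`. The coupling inequality then gives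
`d_TV ≤ 2e·p³ + ℓ·p²`, which implies both stated bounds.
-/

open MeasureTheory ProbabilityTheory Real

namespace FinGraph

theorem iso_core_of_equiv {G H : FinGraph}
    (e : {i : Fin G.n // ∃ j, G.adj i j = true} ≃ {i : Fin H.n // ∃ j, H.adj i j = true})
    (he : ∀ a b, G.adj a.1 b.1 = H.adj (e a).1 (e b).1) : G.core.Iso H.core := by
  set RG := (univ : Finset (Fin G.n)).filter (fun i => ∃ j, G.adj i j = true)
  set RH := (univ : Finset (Fin H.n)).filter (fun i => ∃ j, H.adj i j = true)
  let rG : {x // x ∈ RG} ≃ {i : Fin G.n // ∃ j, G.adj i j = true} :=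
    Equiv.subtypeEquivRight (fun x => by simp [RG])
  let rH : {x // x ∈ RH} ≃ {i : Fin H.n // ∃ j, H.adj i j = true} :=
    Equiv.subtypeEquivRight (fun x => by simp [RH])
  let oG := RG.orderIsoOfFin rfl
  let oH := RH.orderIsoOfFin rfl
  let E : Fin G.core.n ≃ Fin H.core.n :=
    oG.toEquiv.trans ((rG.trans (e.trans rH.symm)).trans oH.toEquiv.symm)
  have hE : ∀ z, ((oH (E z)) : Fin H.n) = (e (rG (oG z))).1 := fun z =>
    congrArg Subtype.val (oH.apply_symm_apply _)
  refine ⟨E, fun i j => ?_⟩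
  change G.adj (oG i).1 (oG j).1 = H.adj (oH (E i)).1 (oH (E j)).1
  rw [hE i, hE j]
  exact he (rG (oG i)) (rG (oG j))

theorem Iso.core {G H : FinGraph} (h : G.Iso H) : G.core.Iso H.core := by
  obtain ⟨σ, hσ⟩ := h
  refine iso_core_of_equiv (σ.subtypeEquiv fun i => ?_) fun a b => hσ a b
  exact ⟨fun ⟨j, hj⟩ => ⟨σ j, hσ i j ▸ hj⟩,
    fun ⟨j, hj⟩ => ⟨σ.symm j, by rw [hσ, σ.apply_symm_apply]; exact hj⟩⟩

end FinGraph

theorem seqGraph_comp_equiv_iso (G : FinGraph) {k m : ℕ} (y : Fin m → Fin G.n)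
    (e : Fin k ≃ Fin m) :
    (seqGraph G k (y ∘ e)).Iso (seqGraph G m y) :=
  ⟨e, fun _ _ => rfl⟩

theorem seqGraph_core_iso_of_injOn (G : FinGraph) {k m : ℕ} {x : Fin k → Fin G.n}
    {y : Fin m → Fin G.n}
    (hx : Set.InjOn x {a | ∃ b, G.adj (x a) (x b) = true})
    (hy : Set.InjOn y {a | ∃ b, G.adj (y a) (y b) = true})
    (hrange : ∀ q, (q ∈ Set.range x ∧ ∃ r ∈ Set.range x, G.adj q r = true) ↔
      (q ∈ Set.range y ∧ ∃ r ∈ Set.range y, G.adj q r = true)) :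
    (seqGraph G k x).core.Iso (seqGraph G m y).core := by
  have himage : ∀ {l : ℕ} (z : Fin l → Fin G.n),
      z '' {a | ∃ b, G.adj (z a) (z b) = true} =
        {q | q ∈ Set.range z ∧ ∃ r ∈ Set.range z, G.adj q r = true} := by
    intro l z
    ext q
    simp only [Set.mem_image, Set.mem_ofPred_eq, Set.mem_range, exists_exists_eq_and]
    constructor
    · rintro ⟨a, ⟨b, hab⟩, rfl⟩
      exact ⟨⟨a, rfl⟩, b, hab⟩
    · rintro ⟨⟨a, rfl⟩, b, hab⟩
      exact ⟨a, ⟨b, hab⟩, rfl⟩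
  let e := (Equiv.Set.imageOfInjOn x _ hx).trans
    ((Equiv.setCongr ((himage x).trans ((Set.ext hrange).trans (himage y).symm))).trans
      (Equiv.Set.imageOfInjOn y _ hy).symm)
  have he : ∀ a, y (e a) = x a := fun a =>
    congrArg Subtype.val ((Equiv.Set.imageOfInjOn y _ hy).apply_symm_apply _)
  exact FinGraph.iso_core_of_equiv e fun a b => by
    change G.adj (x a.1) (x b.1) = G.adj (y (e a).1) (y (e b).1)
    exact (congrArg₂ G.adj (he a) (he b)).symm

section FiberCard

variable {ι : Type*} [DecidableEq ι]

def fiberCard {k : ℕ} (x : Fin k → ι) (i : ι) : ℕ := #{a | x a = i}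

theorem fiberCard_comp_equiv {k m : ℕ} (x : Fin m → ι) (e : Fin k ≃ Fin m) :
    fiberCard (x ∘ e) = fiberCard x := by
  funext i
  simp only [fiberCard, ← Fintype.card_subtype]
  exact Fintype.card_congr (e.subtypeEquiv fun a => by simp)

theorem exists_equiv_comp_eq_of_fiberCard_eq {k m : ℕ} {x : Fin k → ι} {y : Fin m → ι}
    (h : fiberCard x = fiberCard y) : ∃ e : Fin k ≃ Fin m, y ∘ e = x := by
  have hfiber : ∀ i, {a // x a = i} ≃ {b // y b = i} := fun i =>
    Fintype.equivOfCardEq (by simpa only [fiberCard, Fintype.card_subtype] using congrFun h i)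
  refine ⟨(Equiv.sigmaFiberEquiv x).symm.trans
    ((Equiv.sigmaCongrRight hfiber).trans (Equiv.sigmaFiberEquiv y)), funext fun a => ?_⟩
  exact (hfiber (x a) ⟨a, rfl⟩).2

theorem sum_fiberCard [Fintype ι] {k : ℕ} (x : Fin k → ι) : ∑ i, fiberCard x i = k := by
  simpa [fiberCard] using (card_eq_sum_card_fiberwise (f := x) (s := univ) (t := univ)
    (fun a _ => mem_univ (x a))).symm

theorem fiberCard_ne_zero_iff {k : ℕ} {x : Fin k → ι} {i : ι} :
    fiberCard x i ≠ 0 ↔ i ∈ Set.range x := by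
  simp [fiberCard, Set.mem_range]

end FiberCard

def sampleOfCounts {n : ℕ} (N : Fin n → ℕ) : Fin (∑ i, N i) → Fin n :=
  fun a => (finSigmaFinEquiv.symm a).1

theorem fiberCard_sampleOfCounts {n : ℕ} (N : Fin n → ℕ) :
    fiberCard (sampleOfCounts N) = N := by
  funext i
  rw [fiberCard, ← Fintype.card_subtype, ← Fintype.card_fin (N i)]
  exact Fintype.card_congr ((finSigmaFinEquiv.symm.subtypeEquiv fun _ => Iff.rfl).trans
    (Equiv.sigmaSubtype i))

theorem card_fiberCard_eq_multinomial {n k : ℕ} (N : Fin n → ℕ) (hN : ∑ i, N i = k) :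
    #{x : Fin k → Fin n | fiberCard x = N} = Nat.multinomial univ N := by
  set T : Finset (Fin k → Fin n) := {x | fiberCard x = N}
  let x₀ := sampleOfCounts N ∘ finCongr hN.symm
  have hx₀ : fiberCard x₀ = N := by rw [fiberCard_comp_equiv, fiberCard_sampleOfCounts]
  -- orbit-stabilizer for `Equiv.Perm (Fin k)` acting on `T` by precomposition
  have hfiber : ∀ x ∈ T, #{σ : Equiv.Perm (Fin k) | x₀ ∘ σ = x} = ∏ i, (N i).factorial := by
    intro x hx
    obtain ⟨τ, hτ⟩ := exists_equiv_comp_eq_of_fiberCard_eq ((mem_filter.mp hx).2.trans hx₀.symm)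
    subst hτ
    rw [← Fintype.card_subtype, ← hx₀,
      Fintype.card_congr (Equiv.subtypeEquiv (q := fun g : Equiv.Perm (Fin k) => x₀ ∘ g = x₀)
        (Equiv.mulRight τ⁻¹) fun σ => ?_), DomMulAct.stabilizer_card x₀]
    · simp only [fiberCard, Fintype.card_subtype]
    · constructor
      · intro h
        funext a
        simpa using congrFun h (τ⁻¹ a)
      · intro h
        funext a
        simpa using congrFun h (τ a)
  have hk : Fintype.card (Equiv.Perm (Fin k)) = #T * ∏ i, (N i).factorial := by
    rw [← card_univ, card_eq_sum_card_fiberwise (f := fun σ : Equiv.Perm (Fin k) => x₀ ∘ σ)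
        (t := T) (fun σ _ => by simp [T, fiberCard_comp_equiv, hx₀]),
      sum_congr rfl hfiber, sum_const, smul_eq_mul]
  have hspec := Nat.multinomial_spec univ N
  rw [Fintype.card_perm, Fintype.card_fin] at hk
  rw [hN, hk, mul_comm #T] at hspec
  exact (Nat.eq_of_mul_eq_mul_left (prod_pos fun i _ => (N i).factorial_pos) hspec).symm

theorem sum_comp_fiberCard {M : Type*} [AddCommMonoid M] {n k : ℕ} (g : (Fin n → ℕ) → M) :
    ∑ x : Fin k → Fin n, g (fiberCard x) =
      ∑ N ∈ piAntidiag univ k, Nat.multinomial univ N • g N := by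
  rw [← sum_fiberwise_of_maps_to (g := fiberCard) (t := piAntidiag univ k)
    (fun x _ => mem_piAntidiag.mpr ⟨sum_fiberCard x, fun i _ => mem_univ i⟩)]
  refine sum_congr rfl fun N hN => ?_
  rw [sum_congr rfl fun x hx => by rw [(mem_filter.mp hx).2], sum_const,
    card_fiberCard_eq_multinomial N (mem_piAntidiag.mp hN).1]

theorem ENNReal.tsum_eq_tsum_sum_piAntidiag {ι : Type*} [Fintype ι] [DecidableEq ι]
    (f : (ι → ℕ) → ℝ≥0∞) : ∑' N, f N = ∑' k, ∑ N ∈ piAntidiag univ k, f N := by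
  calc ∑' N, f N = ∑' N, ∑' k, if k = ∑ i, N i then f N else 0 :=
        tsum_congr fun N => (tsum_ite_eq (∑ i, N i) fun _ => f N).symm
    _ = ∑' k, ∑' N, if k = ∑ i, N i then f N else 0 := ENNReal.tsum_comm
    _ = ∑' k, ∑ N ∈ piAntidiag univ k, f N := tsum_congr fun k => by
        rw [tsum_eq_sum (s := piAntidiag univ k) fun N hN =>
          if_neg fun h => hN (mem_piAntidiag.mpr ⟨h.symm, fun i _ => mem_univ i⟩)]
        exact sum_congr rfl fun N hN => if_pos (mem_piAntidiag.mp hN).1.symm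

def countGraph (G : FinGraph) (N : Fin G.n → ℕ) : FinGraph := seqGraph G _ (sampleOfCounts N)

theorem seqGraph_iso_countGraph (G : FinGraph) {k : ℕ} (x : Fin k → Fin G.n) :
    (seqGraph G k x).Iso (countGraph G (fiberCard x)) := by
  obtain ⟨e, he⟩ :=
    exists_equiv_comp_eq_of_fiberCard_eq (fiberCard_sampleOfCounts (fiberCard x)).symm
  have h := seqGraph_comp_equiv_iso G (sampleOfCounts (fiberCard x)) e
  rwa [he] at h

section Coupling

variable {p : ℝ}

-- Couples Bernoulli(p) (first coordinate) with Poisson(p) (second coordinate) so that a positive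
-- count forces `true`. For `0 ≤ p ≤ 1` both weights are nonnegative, as `1 - p ≤ exp (-p)`.
noncomputable def vertexCoupling (p : ℝ) : Measure (Bool × ℕ) :=
  ENNReal.ofReal (1 - p) • Measure.dirac (false, 0) +
    ENNReal.ofReal (exp (-p) - (1 - p)) • Measure.dirac (true, 0) +
    ((poissonMeasure p.toNNReal).restrict {0}ᶜ).map (fun n => (true, n))

def keptState : Set (Bool × ℕ) := {a | a.1 = true}

def miscountedState : Set (Bool × ℕ) := {a | a.1 = true ∧ a.2 ≠ 1}

def strayState : Set (Bool × ℕ) := {a | a.1 = false ∧ a.2 ≠ 0}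

theorem poissonMeasure_toNNReal_singleton (hp0 : 0 ≤ p) (n : ℕ) :
    poissonMeasure p.toNNReal {n} = ENNReal.ofReal (exp (-p) * p ^ n / n.factorial) := by
  rw [poissonMeasure_singleton, Real.coe_toNNReal p hp0]

theorem vertexCoupling_map_snd (hp0 : 0 ≤ p) (hp1 : p ≤ 1) :
    (vertexCoupling p).map Prod.snd = poissonMeasure p.toNNReal := by
  have hzero : ENNReal.ofReal (1 - p) + ENNReal.ofReal (exp (-p) - (1 - p)) =
      poissonMeasure p.toNNReal {0} := by
    rw [poissonMeasure_toNNReal_singleton hp0, ← ENNReal.ofReal_add (by linarith)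
      (by linarith [add_one_le_exp (-p)])]
    congr 1
    simp
  rw [vertexCoupling, Measure.map_add _ _ (by fun_prop), Measure.map_add _ _ (by fun_prop),
    Measure.map_smul, Measure.map_smul, Measure.map_dirac, Measure.map_dirac,
    Measure.map_map (by fun_prop) (by fun_prop)]
  simp only [Function.comp_def, Measure.map_id']
  rw [← add_smul, hzero, ← Measure.restrict_singleton,
    Measure.restrict_add_restrict_compl (measurableSet_singleton 0)]

theorem isProbabilityMeasure_vertexCoupling (hp0 : 0 ≤ p) (hp1 : p ≤ 1) :
    IsProbabilityMeasure (vertexCoupling p) :=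
  ⟨by rw [← Set.preimage_univ (f := Prod.snd), ← Measure.map_apply measurable_snd .univ,
    vertexCoupling_map_snd hp0 hp1, measure_univ]⟩

theorem vertexCoupling_fst_preimage (hp0 : 0 ≤ p) (hp1 : p ≤ 1) (b : Bool) :
    vertexCoupling p (Prod.fst ⁻¹' {b}) = ENNReal.ofReal (if b then p else 1 - p) := by
  have hfalse : vertexCoupling p (Prod.fst ⁻¹' {false}) = ENNReal.ofReal (1 - p) := by
    simp [vertexCoupling, Measure.map_apply Measurable.of_discrete MeasurableSet.of_discrete,
      Set.preimage_preimage]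
  cases b
  · exact hfalse
  · have := isProbabilityMeasure_vertexCoupling hp0 hp1
    have hcompl : Prod.fst ⁻¹' {true} = (Prod.fst ⁻¹' {false} : Set (Bool × ℕ))ᶜ := by
      ext ⟨b, n⟩; simp
    rw [hcompl, prob_compl_eq_one_sub MeasurableSet.of_discrete, hfalse, if_pos rfl,
      ← ENNReal.ofReal_one, ← ENNReal.ofReal_sub _ (by linarith), sub_sub_cancel]

theorem vertexCoupling_strayState : vertexCoupling p strayState = 0 := by
  simp [vertexCoupling, strayState,
    Measure.map_apply Measurable.of_discrete MeasurableSet.of_discrete]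

theorem vertexCoupling_real_keptState (hp0 : 0 ≤ p) (hp1 : p ≤ 1) :
    (vertexCoupling p).real keptState = p := by
  rw [measureReal_def, show keptState = Prod.fst ⁻¹' {true} from rfl,
    vertexCoupling_fst_preimage hp0 hp1, if_pos rfl, ENNReal.toReal_ofReal hp0]

theorem vertexCoupling_real_miscountedState_le (hp0 : 0 ≤ p) (hp1 : p ≤ 1) :
    (vertexCoupling p).real miscountedState ≤ p ^ 2 := by
  have := isProbabilityMeasure_vertexCoupling hp0 hp1
  have hone : vertexCoupling p {(true, 1)} = ENNReal.ofReal (exp (-p) * p) := by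
    have hpre : (fun n : ℕ => (true, n)) ⁻¹' {(true, 1)} ∩ {0}ᶜ = {1} := by
      ext n; simp +contextual
    simp [vertexCoupling, Measure.map_apply Measurable.of_discrete MeasurableSet.of_discrete,
      hpre, poissonMeasure_toNNReal_singleton hp0]
  have hset : miscountedState = keptState \ {(true, 1)} := by
    ext ⟨b, n⟩; cases b <;> simp [miscountedState, keptState]
  rw [hset, measureReal_sdiff (by simp [keptState]) (measurableSet_singleton _),
    vertexCoupling_real_keptState hp0 hp1, measureReal_def, hone,
    ENNReal.toReal_ofReal (by positivity)]
  nlinarith [add_one_le_exp (-p)]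

end Coupling

section SampleCoupling

variable {p : ℝ} {n : ℕ}

noncomputable def sampleCoupling (n : ℕ) (p : ℝ) : Measure (Fin n → Bool × ℕ) :=
  Measure.pi fun _ => vertexCoupling p

def keptSet (c : Fin n → Bool × ℕ) : Finset (Fin n) := {i | (c i).1 = true}

def counts (c : Fin n → Bool × ℕ) : Fin n → ℕ := fun i => (c i).2

theorem isProbabilityMeasure_sampleCoupling (hp0 : 0 ≤ p) (hp1 : p ≤ 1) :
    IsProbabilityMeasure (sampleCoupling n p) :=
  have := isProbabilityMeasure_vertexCoupling hp0 hp1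
  Measure.pi.instIsProbabilityMeasure _

theorem sampleCoupling_keptSet_preimage (hp0 : 0 ≤ p) (hp1 : p ≤ 1) (G : FinGraph)
    (S : Finset (Fin G.n)) :
    sampleCoupling G.n p {c | keptSet c = S} = ENNReal.ofReal (sampleWeight G p S) := by
  have := isProbabilityMeasure_vertexCoupling hp0 hp1
  have hset : {c : Fin G.n → Bool × ℕ | keptSet c = S} =
      Set.univ.pi fun i => Prod.fst ⁻¹' {decide (i ∈ S)} := by
    ext c
    simp only [keptSet, Finset.ext_iff, mem_filter, mem_univ, true_and, Set.mem_ofPred_eq,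
      Set.mem_pi, Set.mem_univ, forall_const, Set.mem_preimage, Set.mem_singleton_iff]
    exact forall_congr' fun i => by cases (c i).1 <;> simp
  rw [hset, sampleCoupling, Measure.pi_pi]
  simp only [vertexCoupling_fst_preimage hp0 hp1, decide_eq_true_eq, apply_ite ENNReal.ofReal]
  rw [prod_ite, prod_const, prod_const, sampleWeight, min_eq_left hp1,
    ENNReal.ofReal_mul (by positivity), ENNReal.ofReal_pow hp0,
    ENNReal.ofReal_pow (by linarith)]
  congr 2
  · simp
  · rw [filter_not, card_sdiff_of_subset (filter_subset _ _)]
    simp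

theorem sampleCoupling_counts_preimage (hp0 : 0 ≤ p) (hp1 : p ≤ 1) (N : Fin n → ℕ) :
    sampleCoupling n p {c | counts c = N} = ∏ i, poissonMeasure p.toNNReal {N i} := by
  have := isProbabilityMeasure_vertexCoupling hp0 hp1
  have hset : {c : Fin n → Bool × ℕ | counts c = N} =
      Set.univ.pi fun i => Prod.snd ⁻¹' {N i} := by
    ext c
    simp [counts, funext_iff]
  rw [hset, sampleCoupling, Measure.pi_pi]
  simp only [← Measure.map_apply measurable_snd (measurableSet_singleton _),
    vertexCoupling_map_snd hp0 hp1]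

theorem sampleCoupling_real_coord (hp0 : 0 ≤ p) (hp1 : p ≤ 1) (i : Fin n)
    (s : Set (Bool × ℕ)) :
    (sampleCoupling n p).real {c | c i ∈ s} = (vertexCoupling p).real s := by
  have := isProbabilityMeasure_vertexCoupling hp0 hp1
  exact (measurePreserving_eval _ i).measureReal_preimage
    MeasurableSet.of_discrete.nullMeasurableSet

theorem sampleCoupling_real_coord_pair (hp0 : 0 ≤ p) (hp1 : p ≤ 1) {i j : Fin n} (hij : i ≠ j)
    (s t : Set (Bool × ℕ)) :
    (sampleCoupling n p).real {c | c i ∈ s ∧ c j ∈ t} =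
      (vertexCoupling p).real s * (vertexCoupling p).real t := by
  have := isProbabilityMeasure_vertexCoupling hp0 hp1
  have hset : {c : Fin n → Bool × ℕ | c i ∈ s ∧ c j ∈ t} =
      (({i, j} : Finset (Fin n)) : Set (Fin n)).pi fun k => if k = i then s else t := by
    ext c
    simp [hij.symm]
  rw [hset, measureReal_def, sampleCoupling, Measure.pi_pi_finset, prod_pair hij, if_pos rfl,
    if_neg hij.symm, ENNReal.toReal_mul, measureReal_def, measureReal_def]

end SampleCoupling

instance : Countable FinGraph := by
  refine Function.Injective.countable
    (f := fun G : FinGraph => (⟨G.n, G.adj⟩ : Σ n, Fin n → Fin n → Bool)) ?_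
  rintro ⟨n, adj, _⟩ ⟨m, adj', _⟩ h
  obtain ⟨rfl, h⟩ := Sigma.mk.inj_iff.mp h
  cases eq_of_heq h
  rfl

instance : Countable UGraph := inferInstanceAs (Countable (Quot FinGraph.Iso))

theorem hasSum_measureReal_preimage_singleton {α γ : Type*} [Countable α] [MeasurableSpace γ]
    [DiscreteMeasurableSpace γ] (μ : Measure γ) [IsFiniteMeasure μ] (F : γ → α) (A : Set α) :
    HasSum (fun a : A => μ.real (F ⁻¹' {a.1})) (μ.real (F ⁻¹' A)) := by
  have h := tsum_measure_preimage_singleton (μ := μ) A.to_countable (f := F)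
    fun _ _ => MeasurableSet.of_discrete
  have hs := (ENNReal.summable_toReal (h ▸ measure_ne_top μ _)).hasSum
  rwa [← ENNReal.tsum_toReal_eq fun _ => measure_ne_top μ _, h] at hs

theorem measureReal_preimage_le_add_measureReal_ne {α γ : Type*} [MeasurableSpace γ]
    (μ : Measure γ) [IsFiniteMeasure μ] (Φ Ψ : γ → α) (A : Set α) :
    μ.real (Φ ⁻¹' A) ≤ μ.real (Ψ ⁻¹' A) + μ.real {c | Φ c ≠ Ψ c} := by
  refine (measureReal_mono fun c (hc : Φ c ∈ A) => ?_).trans (measureReal_union_le _ _)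
  by_cases h : Φ c = Ψ c
  · exact Or.inl (show Ψ c ∈ A from h ▸ hc)
  · exact Or.inr h

theorem dTV_le_measureReal_ne {α γ : Type*} [Countable α] [MeasurableSpace γ]
    [DiscreteMeasurableSpace γ] (μ : Measure γ) [IsFiniteMeasure μ] (Φ Ψ : γ → α) :
    dTV (fun a => μ.real (Φ ⁻¹' {a})) (fun a => μ.real (Ψ ⁻¹' {a})) ≤
      μ.real {c | Φ c ≠ Ψ c} := by
  refine Real.iSup_le (fun A => ?_) measureReal_nonneg
  rw [((hasSum_measureReal_preimage_singleton μ Φ A).sub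
    (hasSum_measureReal_preimage_singleton μ Ψ A)).tsum_eq, abs_sub_le_iff]
  have hΦΨ := measureReal_preimage_le_add_measureReal_ne μ Φ Ψ A
  have hΨΦ := measureReal_preimage_le_add_measureReal_ne μ Ψ Φ A
  simp only [ne_comm (a := Ψ _)] at hΨΦ
  constructor <;> linarith

section Laws

variable {G : FinGraph} {p : ℝ}

def keptClass (G : FinGraph) (S : Finset (Fin G.n)) : UGraph := (G.induce S).core.cls

def countClass (G : FinGraph) (N : Fin G.n → ℕ) : UGraph := (countGraph G N).core.cls

theorem seqGraph_cls_eq_countClass {k : ℕ} (x : Fin k → Fin G.n) :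
    (seqGraph G k x).core.cls = countClass G (fiberCard x) :=
  Quot.sound (seqGraph_iso_countGraph G x).core

theorem sampleWeight_nonneg (hp0 : 0 ≤ p) (hp1 : p ≤ 1) (S : Finset (Fin G.n)) :
    0 ≤ sampleWeight G p S := by
  rw [sampleWeight, min_eq_left hp1]
  exact mul_nonneg (pow_nonneg hp0 _) (pow_nonneg (sub_nonneg.mpr hp1) _)

theorem pSampleLaw_eq_measureReal (hp0 : 0 ≤ p) (hp1 : p ≤ 1) (H : UGraph) :
    pSampleLaw G p H = (sampleCoupling G.n p).real {c | keptClass G (keptSet c) = H} := by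
  have := isProbabilityMeasure_sampleCoupling (n := G.n) hp0 hp1
  have hset : {c : Fin G.n → Bool × ℕ | keptClass G (keptSet c) = H} =
      keptSet ⁻¹' ↑({S | keptClass G S = H} : Finset (Finset (Fin G.n))) := by
    ext c; simp
  rw [hset, measureReal_def, ← sum_measure_preimage_singleton _ fun _ _ => .of_discrete,
    ENNReal.toReal_sum fun _ _ => measure_ne_top _ _]
  simp only [Set.preimage, Set.mem_singleton_iff, sampleCoupling_keptSet_preimage hp0 hp1 G,
    ENNReal.toReal_ofReal (sampleWeight_nonneg hp0 hp1 _)]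
  rw [pSampleLaw, powerset_univ, sum_filter]
  exact sum_congr rfl fun S _ => by rw [mul_ite, mul_one, mul_zero, keptClass]

theorem prod_poisson_eq_multinomial_mul {n k : ℕ} (N : Fin n → ℕ) (hN : ∑ i, N i = k) :
    ∏ i, exp (-p) * p ^ N i / (N i).factorial =
      exp (-(p * n)) * p ^ k / k.factorial * Nat.multinomial univ N := by
  have hspec : (∏ i, ((N i).factorial : ℝ)) * Nat.multinomial univ N = k.factorial := by
    exact_mod_cast hN ▸ Nat.multinomial_spec univ N
  have hprod : (0 : ℝ) < ∏ i, ((N i).factorial : ℝ) := prod_pos fun i _ => by positivity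
  have hmult : (0 : ℝ) < Nat.multinomial univ N := by exact_mod_cast Nat.multinomial_pos univ N
  rw [prod_div_distrib, prod_mul_distrib, prod_const, prod_pow_eq_pow_sum, hN, card_univ,
    Fintype.card_fin, ← exp_nat_mul, ← hspec]
  field_simp

theorem wrSampleLaw_term_eq (H : UGraph) (k : ℕ) :
    exp (-(p * G.v)) * (p * G.v) ^ k / k.factorial *
        (#{x : Fin k → Fin G.n | (seqGraph G k x).core.cls = H} / (G.v : ℝ) ^ k) =
      ∑ N ∈ piAntidiag univ k,
        (∏ i, exp (-p) * p ^ N i / (N i).factorial) * if countClass G N = H then 1 else 0 := by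
  have hcard : (#{x : Fin k → Fin G.n | (seqGraph G k x).core.cls = H} : ℝ) =
      ∑ N ∈ piAntidiag univ k, (Nat.multinomial univ N : ℝ) *
        if countClass G N = H then 1 else 0 := by
    simp only [card_filter, seqGraph_cls_eq_countClass, Nat.cast_sum, Nat.cast_ite, Nat.cast_one,
      Nat.cast_zero, sum_comp_fiberCard (fun N => if countClass G N = H then (1 : ℝ) else 0),
      nsmul_eq_mul]
  rw [hcard]
  by_cases hempty : piAntidiag (univ : Finset (Fin G.n)) k = ∅
  · simp [hempty]
  have hv : (G.n : ℝ) ^ k ≠ 0 := by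
    intro hzero
    obtain ⟨hv0, hk⟩ := pow_eq_zero_iff'.mp hzero
    have : IsEmpty (Fin G.n) := by
      rw [show G.n = 0 by exact_mod_cast hv0]
      infer_instance
    exact hempty (eq_empty_of_forall_notMem fun N hN =>
      hk (by simpa using (mem_piAntidiag.mp hN).1.symm))
  rw [sum_div, mul_sum]
  refine sum_congr rfl fun N hN => ?_
  rw [prod_poisson_eq_multinomial_mul N (mem_piAntidiag.mp hN).1, mul_pow, FinGraph.v]
  field_simp

theorem wrSampleLaw_eq_measureReal (hp0 : 0 ≤ p) (hp1 : p ≤ 1) (H : UGraph) :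
    wrSampleLaw G p H = (sampleCoupling G.n p).real {c | countClass G (counts c) = H} := by
  have hterm : ∀ k, ENNReal.ofReal (exp (-(p * G.v)) * (p * G.v) ^ k / k.factorial *
      (#{x : Fin k → Fin G.n | (seqGraph G k x).core.cls = H} / (G.v : ℝ) ^ k)) =
      ∑ N ∈ piAntidiag univ k, {N | countClass G N = H}.indicator
        (fun N => sampleCoupling G.n p {c | counts c = N}) N := by
    intro k
    rw [wrSampleLaw_term_eq, ENNReal.ofReal_sum_of_nonneg fun N _ => by positivity]
    refine sum_congr rfl fun N _ => ?_
    by_cases hN : countClass G N = H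
    · rw [Set.indicator_of_mem (s := {N | countClass G N = H}) hN, if_pos hN, mul_one,
        sampleCoupling_counts_preimage hp0 hp1,
        ENNReal.ofReal_prod_of_nonneg fun i _ => by positivity]
      simp only [poissonMeasure_toNNReal_singleton hp0]
    · rw [Set.indicator_of_notMem (s := {N | countClass G N = H}) hN, if_neg hN, mul_zero,
        ENNReal.ofReal_zero]
  have hmeasure : sampleCoupling G.n p {c | countClass G (counts c) = H} =
      ∑' k, ENNReal.ofReal (exp (-(p * G.v)) * (p * G.v) ^ k / k.factorial *
        (#{x : Fin k → Fin G.n | (seqGraph G k x).core.cls = H} / (G.v : ℝ) ^ k)) := by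
    rw [tsum_congr hterm, ← ENNReal.tsum_eq_tsum_sum_piAntidiag, ← _root_.tsum_subtype]
    exact (tsum_measure_preimage_singleton (s := {N | countClass G N = H}) (f := counts)
      (Set.to_countable _) fun _ _ => .of_discrete).symm
  rw [measureReal_def, hmeasure, ENNReal.tsum_toReal_eq fun _ => ENNReal.ofReal_ne_top]
  exact tsum_congr fun k => (ENNReal.toReal_ofReal (by positivity)).symm

end Laws

def FinGraph.edgeFinset (G : FinGraph) : Finset (Fin G.n × Fin G.n) :=
  {q | G.adj q.1 q.2 = true ∧ q.1 < q.2}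

def FinGraph.loopFinset (G : FinGraph) : Finset (Fin G.n) := {i | G.adj i i = true}

section GoodEvent

variable {G : FinGraph} {p : ℝ}

def IsGoodCoupling (G : FinGraph) (c : Fin G.n → Bool × ℕ) : Prop :=
  (∀ i, (c i).2 ≠ 0 → (c i).1 = true) ∧
    ∀ i j, G.adj i j = true → (c i).1 = true → (c j).1 = true → (c i).2 = 1 ∧ (c j).2 = 1

theorem keptClass_eq_countClass {c : Fin G.n → Bool × ℕ} (hc : IsGoodCoupling G c) :
    keptClass G (keptSet c) = countClass G (counts c) := by
  set S := keptSet c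
  set N := counts c
  have hS : ∀ i, i ∈ S ↔ (c i).1 = true := by simp [S, keptSet]
  have hN : ∀ q, q ∈ Set.range (sampleOfCounts N) ↔ N q ≠ 0 := fun q => by
    rw [← fiberCard_ne_zero_iff, fiberCard_sampleOfCounts]
  have hrangeS : Set.range (fun a => (S.orderIsoOfFin rfl a).1) = S := by
    ext q
    refine ⟨fun ⟨a, ha⟩ => ha ▸ (S.orderIsoOfFin rfl a).2, fun hq => ?_⟩
    exact ⟨(S.orderIsoOfFin rfl).symm ⟨q, hq⟩, by simp⟩
  -- `G.induce S` is by definition the pull-back of `G` along the enumeration of `S`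
  refine Quot.sound (seqGraph_core_iso_of_injOn G ?_ ?_ fun q => ?_)
  · exact (Subtype.val_injective.comp (S.orderIsoOfFin rfl).injective).injOn
  · rintro a ⟨b, hab⟩ a' - haa'
    have hone : fiberCard (sampleOfCounts N) (sampleOfCounts N a) ≤ 1 := by
      rw [fiberCard_sampleOfCounts N]
      exact (hc.2 _ _ hab (hc.1 _ ((hN _).mp ⟨a, rfl⟩)) (hc.1 _ ((hN _).mp ⟨b, rfl⟩))).1.le
    exact card_le_one.mp hone a (by simp) a' (by simp [haa'])
  · rw [hrangeS]
    simp only [hN, Finset.mem_coe, hS]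
    constructor
    · rintro ⟨hq, r, hr, hqr⟩
      obtain ⟨hq1, hr1⟩ := hc.2 q r hqr hq hr
      exact ⟨by simp [N, counts, hq1], r, by simp [N, counts, hr1], hqr⟩
    · rintro ⟨hq, r, hr, hqr⟩
      exact ⟨hc.1 q hq, r, hc.1 r hr, hqr⟩

theorem setOf_not_isGoodCoupling_subset :
    {c | ¬ IsGoodCoupling G c} ⊆
      ((⋃ i ∈ (univ : Finset (Fin G.n)), {c | c i ∈ strayState}) ∪
        ⋃ q ∈ G.edgeFinset, ({c | c q.1 ∈ keptState ∧ c q.2 ∈ miscountedState} ∪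
          {c | c q.2 ∈ keptState ∧ c q.1 ∈ miscountedState})) ∪
      ⋃ i ∈ G.loopFinset, {c | c i ∈ miscountedState} := by
  intro c hc
  rw [Set.mem_ofPred_eq, IsGoodCoupling, not_and_or] at hc
  push Not at hc
  simp only [Set.mem_union, Set.mem_iUnion, Set.mem_ofPred_eq, FinGraph.edgeFinset,
    FinGraph.loopFinset, mem_filter, mem_univ, true_and, exists_prop]
  rcases hc with ⟨i, hi, hkept⟩ | ⟨i, j, hij, hi, hj, hone⟩
  · exact Or.inl (Or.inl ⟨i, by simpa using hkept, hi⟩)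
  rcases lt_trichotomy i j with hlt | rfl | hgt
  · refine Or.inl (Or.inr ⟨(i, j), ⟨hij, hlt⟩, ?_⟩)
    by_cases h1 : (c i).2 = 1
    · exact Or.inl ⟨hi, hj, hone h1⟩
    · exact Or.inr ⟨hj, hi, h1⟩
  · exact Or.inr ⟨i, hij, hi, fun h => hone h h⟩
  · refine Or.inl (Or.inr ⟨(j, i), ⟨G.symm i j ▸ hij, hgt⟩, ?_⟩)
    by_cases h1 : (c i).2 = 1
    · exact Or.inr ⟨hi, hj, hone h1⟩
    · exact Or.inl ⟨hj, hi, h1⟩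

theorem measureReal_not_isGoodCoupling_le (hp0 : 0 ≤ p) (hp1 : p ≤ 1) :
    (sampleCoupling G.n p).real {c | ¬ IsGoodCoupling G c} ≤
      2 * G.e * p ^ 3 + G.loops * p ^ 2 := by
  have := isProbabilityMeasure_sampleCoupling (n := G.n) hp0 hp1
  have hstray : (vertexCoupling p).real strayState = 0 := by
    rw [measureReal_def, vertexCoupling_strayState, ENNReal.toReal_zero]
  have hmiscounted := vertexCoupling_real_miscountedState_le hp0 hp1
  have hedge : ∀ {i j : Fin G.n}, i ≠ j →
      (sampleCoupling G.n p).real {c | c i ∈ keptState ∧ c j ∈ miscountedState} ≤ p * p ^ 2 :=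
    fun hij => by
      rw [sampleCoupling_real_coord_pair hp0 hp1 hij, vertexCoupling_real_keptState hp0 hp1]
      exact mul_le_mul_of_nonneg_left hmiscounted hp0
  refine (measureReal_mono setOf_not_isGoodCoupling_subset).trans <|
    (measureReal_union_le _ _).trans <| (add_le_add ((measureReal_union_le _ _).trans <|
      add_le_add (measureReal_biUnion_finset_le _ _) (measureReal_biUnion_finset_le _ _))
      (measureReal_biUnion_finset_le _ _)).trans ?_
  simp only [sampleCoupling_real_coord hp0 hp1, hstray, sum_const_zero, zero_add]
  calc _ ≤ ∑ q ∈ G.edgeFinset, 2 * (p * p ^ 2) + ∑ i ∈ G.loopFinset, p ^ 2 := by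
        gcongr with q hq
        have hne := (mem_filter.mp hq).2.2.ne
        exact (measureReal_union_le _ _).trans (by linarith [hedge hne, hedge hne.symm])
    _ = 2 * G.e * p ^ 3 + G.loops * p ^ 2 := by
        rw [sum_const, sum_const, nsmul_eq_mul, nsmul_eq_mul]
        simp only [FinGraph.edgeFinset, FinGraph.loopFinset, FinGraph.e, FinGraph.loops]
        ring

end GoodEvent

/-- For a finite graph `G` with `v` vertices, `e` non-loop edges and
`ℓ` loops, and `0 < p ≤ 1`, the total variation distance between the laws of the
`p`-sampling and the with-replacement `p`-sampling is at most
`2e(p³ + 3p²/v + p/v²) + 2ℓ(p² + p/v) + p`, and hence at most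
`(2e·p² + 3√(2e)·p + 2ℓ·p + 4)·p`. -/
theorem stmt0 (G : FinGraph) (p : ℝ) (hp0 : 0 < p) (hp1 : p ≤ 1) :
    dTV (pSampleLaw G p) (wrSampleLaw G p) ≤
        2 * (G.e : ℝ) * (p ^ 3 + 3 * p ^ 2 / (G.v : ℝ) + p / (G.v : ℝ) ^ 2) +
          2 * (G.loops : ℝ) * (p ^ 2 + p / (G.v : ℝ)) + p ∧
      dTV (pSampleLaw G p) (wrSampleLaw G p) ≤
        (2 * (G.e : ℝ) * p ^ 2 + 3 * Real.sqrt (2 * (G.e : ℝ)) * p +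
            2 * (G.loops : ℝ) * p + 4) * p := by
  have hp := hp0.le
  have := isProbabilityMeasure_sampleCoupling (n := G.n) hp hp1
  have hdTV : dTV (pSampleLaw G p) (wrSampleLaw G p) ≤ 2 * G.e * p ^ 3 + G.loops * p ^ 2 := by
    rw [funext (pSampleLaw_eq_measureReal (G := G) hp hp1),
      funext (wrSampleLaw_eq_measureReal (G := G) hp hp1)]
    refine (dTV_le_measureReal_ne _ (fun c => keptClass G (keptSet c))
      (fun c => countClass G (counts c))).trans <|
      (measureReal_mono fun c (hc : keptClass G (keptSet c) ≠ countClass G (counts c)) hgood =>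
        hc (keptClass_eq_countClass hgood)).trans <|
      measureReal_not_isGoodCoupling_le hp hp1
  have hextra :
      0 ≤ 2 * (G.e : ℝ) * (3 * p ^ 2 / G.v + p / G.v ^ 2) + 2 * G.loops * (p / G.v) := by
    positivity
  have hsqrt : 0 ≤ 3 * Real.sqrt (2 * (G.e : ℝ)) * p * p := by positivity
  have hloops : 0 ≤ (G.loops : ℝ) * p ^ 2 := by positivity
  constructor <;> linarith
end

section
/- Let G be a finite graph with e non-loop edges and degrees d_1 ≥ d_2 ≥ … ≥ d_v listed in decreasing order (loops not counted), and let 0 < M < k. Then ∑_i d_i·1[d_i > k√e] ≤ (1/(1 − M/k))·∑_{i > M√e} d_i, i.e., the total degree of vertices of degree exceeding k√e is at most 1/(1−M/k) times the total degree of all but the M√e highest-degree vertices. -/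
open Filter Finset
open scoped Classical ENNReal

/-!
Let `A` be the set of vertices `σ i` with `i + 1 > M√e`; its complement has at most `M√e`
elements. A vertex of degree `> k√e` therefore has all but at most `M√e` of its neighbours
in `A`. Summing over the set `T` of such vertices and double counting the edges between `T`
and `A` gives `∑_T d ≤ |T|·M√e + ∑_A d ≤ (M/k)·∑_T d + ∑_A d`, since `|T|·k√e ≤ ∑_T d`.
-/

namespace SimpleGraph

variable {V : Type*} [Fintype V] [DecidableEq V] (H : SimpleGraph V) [DecidableRel H.Adj]

theorem degree_le_card_filter_adj_add_card_compl (A : Finset V) (v : V) :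
    H.degree v ≤ #{w ∈ A | H.Adj v w} + #Aᶜ := by
  rw [← card_neighborFinset_eq_degree, neighborFinset_eq_filter]
  calc #{w | H.Adj v w} ≤ #({w ∈ A | H.Adj v w} ∪ Aᶜ) := by
        refine card_le_card fun w hw => ?_
        by_cases hA : w ∈ A <;> simp_all
    _ ≤ _ := card_union_le _ _

theorem sum_degree_le_card_mul_card_compl_add_sum_degree (T A : Finset V) :
    ∑ v ∈ T, H.degree v ≤ #T * #Aᶜ + ∑ w ∈ A, H.degree w := by
  have hcount : ∑ v ∈ T, #{w ∈ A | H.Adj v w} ≤ ∑ w ∈ A, H.degree w :=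
    calc ∑ v ∈ T, #{w ∈ A | H.Adj v w} = ∑ w ∈ A, #{v ∈ T | H.Adj v w} :=
          sum_card_bipartiteAbove_eq_sum_card_bipartiteBelow H.Adj
      _ ≤ ∑ w ∈ A, H.degree w := by
          refine sum_le_sum fun w _ => ?_
          rw [← card_neighborFinset_eq_degree, neighborFinset_eq_filter]
          exact card_le_card fun v hv => by simp_all [H.adj_comm]
  calc ∑ v ∈ T, H.degree v ≤ ∑ v ∈ T, (#{w ∈ A | H.Adj v w} + #Aᶜ) :=
        sum_le_sum fun v _ => H.degree_le_card_filter_adj_add_card_compl A v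
    _ = ∑ v ∈ T, #{w ∈ A | H.Adj v w} + #T * #Aᶜ := by
        rw [sum_add_distrib, sum_const, smul_eq_mul]
    _ ≤ _ := by linarith

theorem sum_degree_le_of_le_degree {T A : Finset V} {M k s : ℝ} (hM : 0 < M) (hMk : M < k)
    (hT : ∀ v ∈ T, k * s ≤ H.degree v) (hA : (#Aᶜ : ℝ) ≤ M * s) :
    ∑ v ∈ T, (H.degree v : ℝ) ≤ 1 / (1 - M / k) * ∑ w ∈ A, (H.degree w : ℝ) := by
  have hk : 0 < k := hM.trans hMk
  have hdouble : ∑ v ∈ T, (H.degree v : ℝ) ≤ #T * #Aᶜ + ∑ w ∈ A, (H.degree w : ℝ) := by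
    exact_mod_cast H.sum_degree_le_card_mul_card_compl_add_sum_degree T A
  have hlow : #T * (k * s) ≤ ∑ v ∈ T, (H.degree v : ℝ) := by
    simpa using card_nsmul_le_sum T _ _ hT
  have hcompl : (#T : ℝ) * #Aᶜ ≤ M / k * ∑ v ∈ T, (H.degree v : ℝ) :=
    calc (#T : ℝ) * #Aᶜ ≤ #T * (M * s) := by gcongr
      _ = M / k * (#T * (k * s)) := by field_simp
      _ ≤ _ := by gcongr
  have hfrac : 0 < 1 - M / k := by rw [sub_pos, div_lt_one hk]; exact hMk
  rw [div_mul_eq_mul_div, one_mul, le_div_iff₀ hfrac]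
  linarith

end SimpleGraph

theorem Fin.card_filter_val_add_one_le {n : ℕ} {x : ℝ} (hx : 0 ≤ x) :
    (#{i : Fin n | (i.val : ℝ) + 1 ≤ x} : ℝ) ≤ x := by
  have hcard : #{i : Fin n | (i.val : ℝ) + 1 ≤ x} ≤ #(range ⌊x⌋₊) := by
    refine card_le_card_of_injOn Fin.val (fun i hi => ?_) Fin.val_injective.injOn
    have hi : (i.val : ℝ) + 1 ≤ x := (mem_filter.mp (mem_coe.mp hi)).2
    exact mem_range.mpr (Nat.le_floor (by exact_mod_cast hi))
  calc (#{i : Fin n | (i.val : ℝ) + 1 ≤ x} : ℝ) ≤ ⌊x⌋₊ := by simpa using hcard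
    _ ≤ x := Nat.floor_le hx

namespace FinGraph

def toSimpleGraph (G : FinGraph) : SimpleGraph (Fin G.n) where
  Adj i j := G.adj i j = true ∧ i ≠ j
  symm := ⟨fun i j h => ⟨G.symm i j ▸ h.1, h.2.symm⟩⟩
  loopless := ⟨fun _ h => h.2 rfl⟩

theorem deg_eq_degree_toSimpleGraph (G : FinGraph) (i : Fin G.n) :
    G.deg i = G.toSimpleGraph.degree i := by
  rw [← SimpleGraph.card_neighborFinset_eq_degree, SimpleGraph.neighborFinset_eq_filter, deg]
  congr 1
  ext j
  rw [mem_filter, mem_filter]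
  exact and_congr_right fun _ => and_congr_right fun _ => ne_comm

end FinGraph

theorem stmt2_general (G : FinGraph) (M k : ℝ) (hM : 0 < M) (hMk : M < k)
    (σ : Fin G.n ≃ Fin G.n) :
    tailDegSum G k ≤
      (1 / (1 - M / k)) *
        ∑ i ∈ (univ : Finset (Fin G.n)).filter
            (fun i => M * Real.sqrt (G.e : ℝ) < (i.1 : ℝ) + 1),
          (G.deg (σ i) : ℝ) := by
  set s := Real.sqrt (G.e : ℝ)
  set A := (univ.filter fun i : Fin G.n => M * s < (i.val : ℝ) + 1).map σ.toEmbedding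
  have hA : (#Aᶜ : ℝ) ≤ M * s := by
    rw [card_compl, card_map, ← card_compl, compl_filter]
    simpa only [not_lt] using Fin.card_filter_val_add_one_le (n := G.n) (by positivity)
  have hreindex : ∑ i ∈ univ.filter (fun i : Fin G.n => M * s < (i.val : ℝ) + 1),
      (G.deg (σ i) : ℝ) = ∑ j ∈ A, (G.deg j : ℝ) := by
    simp [A, sum_map]
  rw [hreindex, tailDegSum, ← sum_filter]
  simp only [FinGraph.deg_eq_degree_toSimpleGraph]
  exact G.toSimpleGraph.sum_degree_le_of_le_degree hM hMk
    (fun v hv => (mem_filter.mp hv).2.le) hA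

/-- Let `G` have `e` non-loop edges and degrees listed in decreasing
order via an enumeration `σ` (so `i ↦ deg(σ i)` is antitone), and let `0 < M < k`. Then
the total degree of vertices of degree exceeding `k√e` is at most `1/(1 − M/k)` times the
total degree of all but the `M√e` highest-degree vertices. -/
theorem stmt2 (G : FinGraph) (M k : ℝ) (hM : 0 < M) (hMk : M < k)
    (σ : Fin G.n ≃ Fin G.n) (hσ : Antitone fun i => G.deg (σ i)) :
    tailDegSum G k ≤
      (1 / (1 - M / k)) *
        ∑ i ∈ (univ : Finset (Fin G.n)).filter
            (fun i => M * Real.sqrt (G.e : ℝ) < (i.1 : ℝ) + 1),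
          (G.deg (σ i) : ℝ) :=
  stmt2_general G M k hM hMk σ
end

section
/- If a sequence of finite graphs (G_j) has uniformly regular tails, then it is uniformly sampling regular. -/
open Filter Finset
open scoped Classical ENNReal

/-- A sequence of graphs has uniformly regular tails: for every `ε > 0` there is `M` such
that, ordering the vertices of each `G j` by decreasing degree, the total degree of all
but the `M√(e(G j))` highest-degree vertices is at most `ε · 2e(G j)`. -/
def UniformlyRegularTails (G : ℕ → FinGraph) : Prop :=
  ∀ ε : ℝ, 0 < ε → ∃ M : ℝ, 0 < M ∧ ∀ j, ∀ σ : Fin (G j).n ≃ Fin (G j).n,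
    (Antitone fun i => (G j).deg (σ i)) →
    (1 / (2 * ((G j).e : ℝ))) *
        ∑ i ∈ (univ : Finset (Fin (G j).n)).filter
            (fun i => M * Real.sqrt ((G j).e : ℝ) < (i.1 : ℝ) + 1),
          ((G j).deg (σ i) : ℝ) ≤ ε

/-! Take `k = 2M`, where `M` is the regular-tails constant for `ε/8`, and let `B` be the set of
all but the `M√e` vertices of highest degree. A vertex of degree `> 2M√e` has at most `M√e`
neighbours outside `B`, so more than half of its degree goes into `B`; double counting then bounds
the total degree of such vertices by twice the total degree of `B`, which is at most `εe/4`. -/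

namespace FinGraph

def neighborFinset (G : FinGraph) (i : Fin G.n) : Finset (Fin G.n) :=
  (univ : Finset (Fin G.n)).filter (fun j => G.adj i j = true ∧ j ≠ i)

theorem card_neighborFinset (G : FinGraph) (i : Fin G.n) :
    (G.neighborFinset i).card = G.deg i := rfl

theorem mem_neighborFinset_comm (G : FinGraph) {i j : Fin G.n} :
    j ∈ G.neighborFinset i ↔ i ∈ G.neighborFinset j := by
  simp only [neighborFinset, mem_filter, mem_univ, true_and, G.symm i j, ne_comm]

theorem sum_card_neighborFinset_inter_le (G : FinGraph) (A B : Finset (Fin G.n)) :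
    ∑ v ∈ A, (G.neighborFinset v ∩ B).card ≤ ∑ w ∈ B, G.deg w := by
  have hcount := sum_card_bipartiteAbove_eq_sum_card_bipartiteBelow
    (s := A) (t := B) (r := fun v w => w ∈ G.neighborFinset v)
  calc ∑ v ∈ A, (G.neighborFinset v ∩ B).card
      = ∑ w ∈ B, (A.bipartiteBelow (fun v w => w ∈ G.neighborFinset v) w).card := by
        rw [← hcount]
        refine sum_congr rfl fun v _ => congrArg card ?_
        ext w
        simp [bipartiteAbove, and_comm]
    _ ≤ ∑ w ∈ B, G.deg w := by
        refine sum_le_sum fun w _ => card_le_card fun v hv => ?_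
        simp only [bipartiteBelow, mem_filter] at hv
        exact G.mem_neighborFinset_comm.mp hv.2

theorem deg_le_card_neighborFinset_inter_add_card_compl (G : FinGraph) (B : Finset (Fin G.n))
    (v : Fin G.n) : G.deg v ≤ (G.neighborFinset v ∩ B).card + Bᶜ.card := by
  rw [← card_neighborFinset, ← card_inter_add_card_sdiff (G.neighborFinset v) B,
    sdiff_eq_inter_compl]
  exact Nat.add_le_add_left (card_le_card inter_subset_right) _

theorem sum_deg_le_sum_deg_add_card_mul_card_compl (G : FinGraph) (T B : Finset (Fin G.n)) :
    ∑ v ∈ T, G.deg v ≤ ∑ w ∈ B, G.deg w + T.card * Bᶜ.card := by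
  calc ∑ v ∈ T, G.deg v ≤ ∑ v ∈ T, ((G.neighborFinset v ∩ B).card + Bᶜ.card) :=
        sum_le_sum fun v _ => G.deg_le_card_neighborFinset_inter_add_card_compl B v
    _ ≤ ∑ w ∈ B, G.deg w + T.card * Bᶜ.card := by
        rw [sum_add_distrib, sum_const, smul_eq_mul]
        exact Nat.add_le_add_right (G.sum_card_neighborFinset_inter_le T B) _

theorem sum_deg_filter_lt_le (G : FinGraph) (B : Finset (Fin G.n)) {t : ℝ}
    (hB : (Bᶜ.card : ℝ) ≤ t / 2) :
    ∑ v ∈ (univ : Finset (Fin G.n)).filter (fun v => t < (G.deg v : ℝ)), (G.deg v : ℝ)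
      ≤ 2 * ∑ w ∈ B, (G.deg w : ℝ) := by
  set T := (univ : Finset (Fin G.n)).filter (fun v => t < (G.deg v : ℝ))
  have hlower : (T.card : ℝ) * t ≤ ∑ v ∈ T, (G.deg v : ℝ) := by
    rw [← nsmul_eq_mul]
    exact card_nsmul_le_sum T _ _ fun v hv => (mem_filter.mp hv).2.le
  have hupper : ∑ v ∈ T, (G.deg v : ℝ) ≤ ∑ w ∈ B, (G.deg w : ℝ) + T.card * Bᶜ.card := by
    exact_mod_cast G.sum_deg_le_sum_deg_add_card_mul_card_compl T B
  have hcross : (T.card : ℝ) * Bᶜ.card ≤ T.card * (t / 2) :=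
    mul_le_mul_of_nonneg_left hB (Nat.cast_nonneg _)
  linarith

theorem tailDegSum_le (G : FinGraph) (B : Finset (Fin G.n)) {k : ℝ}
    (hB : (Bᶜ.card : ℝ) ≤ k * Real.sqrt (G.e : ℝ) / 2) :
    tailDegSum G k ≤ 2 * ∑ w ∈ B, (G.deg w : ℝ) := by
  rw [tailDegSum, ← sum_filter]
  exact G.sum_deg_filter_lt_le B hB

theorem exists_antitone_deg (G : FinGraph) :
    ∃ σ : Fin G.n ≃ Fin G.n, Antitone fun i => G.deg (σ i) :=
  ⟨Tuple.sort (fun i => OrderDual.toDual (G.deg i)),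
    monotone_toDual_comp_iff.mp (Tuple.monotone_sort fun i => OrderDual.toDual (G.deg i))⟩

end FinGraph

theorem Fin.card_filter_val_add_one_le_s3 {n : ℕ} {c : ℝ} (hc : 0 ≤ c) :
    (((univ : Finset (Fin n)).filter (fun i => (i.1 : ℝ) + 1 ≤ c)).card : ℝ) ≤ c := by
  have hsub : ((univ : Finset (Fin n)).filter (fun i => (i.1 : ℝ) + 1 ≤ c)).map
      Fin.valEmbedding ⊆ range ⌊c⌋₊ := by
    intro m hm
    obtain ⟨i, hi, rfl⟩ := mem_map.mp hm
    have hi : (i.1 : ℝ) + 1 ≤ c := (mem_filter.mp hi).2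
    exact mem_range.mpr (Nat.le_floor (by push_cast; exact hi))
  calc _ ≤ (⌊c⌋₊ : ℝ) := by exact_mod_cast card_map _ ▸ card_range ⌊c⌋₊ ▸ card_le_card hsub
    _ ≤ c := Nat.floor_le hc

theorem card_compl_map_filter_lt_val_add_one_le {n : ℕ} (σ : Fin n ≃ Fin n) {c : ℝ}
    (hc : 0 ≤ c) :
    ((((univ : Finset (Fin n)).filter (fun i => c < (i.1 : ℝ) + 1)).map
      σ.toEmbedding)ᶜ.card : ℝ) ≤ c := by
  rw [card_compl, card_map, ← card_compl, compl_filter]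
  simpa only [not_lt] using Fin.card_filter_val_add_one_le_s3 hc

/-- If a sequence of finite graphs has uniformly regular tails, then it
is uniformly sampling regular. -/
theorem stmt3 (G : ℕ → FinGraph) (h : UniformlyRegularTails G) :
    UniformlySamplingRegular G := by
  intro ε hε
  obtain ⟨M, hM, hURT⟩ := h (ε / 8) (by positivity)
  refine ⟨2 * M, by positivity, fun j => ?_⟩
  rcases Nat.eq_zero_or_pos (G j).e with hE | hE
  · simpa [hE] using hε
  have hE : (0 : ℝ) < (G j).e := by exact_mod_cast hE
  obtain ⟨σ, hσ⟩ := (G j).exists_antitone_deg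
  set B := ((univ : Finset (Fin (G j).n)).filter
    (fun i => M * Real.sqrt ((G j).e : ℝ) < (i.1 : ℝ) + 1)).map σ.toEmbedding
  have hB : (Bᶜ.card : ℝ) ≤ 2 * M * Real.sqrt ((G j).e : ℝ) / 2 := by
    rw [mul_assoc, mul_div_cancel_left₀ _ two_ne_zero]
    exact card_compl_map_filter_lt_val_add_one_le σ (by positivity)
  have hSB : ∑ w ∈ B, ((G j).deg w : ℝ) ≤ ε / 4 * (G j).e := by
    have htail := hURT j σ hσ
    rw [one_div, inv_mul_le_iff₀ (by positivity)] at htail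
    rw [sum_map, Equiv.coe_toEmbedding]
    linarith
  calc 1 / ((G j).e : ℝ) * tailDegSum (G j) (2 * M)
      ≤ 1 / (G j).e * (2 * (ε / 4 * (G j).e)) := by
        gcongr
        exact ((G j).tailDegSum_le B hB).trans (by linarith)
    _ < ε := by field_simp; linarith
end

section
/- Let (G_j) be a sequence of finite graphs with e(G_j) → ∞ as j → ∞, fix r > 0, and set p_j = r/√(2e(G_j)). Then the family of random variables (e(S_{p_j}(G_j)))_{j∈ℕ}, the numbers of non-loop edges of the p_j-sampled subgraphs, is uniformly integrable if and only if the sequence (G_j) is uniformly sampling regular. -/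
open Filter Finset
open scoped Classical ENNReal

/-!
Write `q = min p 1`, so that a fixed set of `m` vertices survives the sampling with
probability `q ^ m`, and `X` for the number of kept edges.

If the edge counts are uniformly integrable, few edges sit at vertices of degree `dᵢ > k√e`:
such a vertex, when kept, has on average `q dᵢ ≥ 2M` kept neighbours, and half the sum of the
kept neighbour counts exceeding `M` is at most `X·1[X > M]`. Taking expectations,
`q²/4 · ∑_{dᵢ > k√e} dᵢ ≤ E[X·1[X > M]]`, and `q² = r²/(2e)`.

Conversely, let `Z` count the kept edges meeting a vertex of degree `> k√e` and `Y` the others,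
so `X·1[X > M] ≤ Z + Y·X/M`. Here `E[Z] ≤ q² ∑_{dᵢ > k√e} dᵢ` is small by sampling regularity,
while `E[Y·X]` sums `q ^ |a ∪ b|` over the low-degree edges `a` and all edges `b`: either
`b = a`, or `b` is one of the `≤ 2k√e` other edges at the endpoints of `a`, or `b` is disjoint
from `a`. This gives `E[Y·X] ≤ r²/2 + k r³ + r⁴/4`.
-/

lemma ite_lt_le_add_inv_mul {y z M : ℝ} (hy : 0 ≤ y) (hz : 0 ≤ z) (hM : 0 < M) :
    (if M < y + z then y + z else 0) ≤ z + M⁻¹ * (y * (y + z)) := by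
  have : 0 ≤ M⁻¹ * (y * (y + z)) := by positivity
  split_ifs with h
  · have : y ≤ M⁻¹ * (y * (y + z)) := by rw [inv_mul_eq_div, le_div_iff₀ hM]; nlinarith
    linarith
  · linarith

lemma div_sqrt_two_mul_sq_mul {r x : ℝ} (hx : 0 < x) : (r / √(2 * x)) ^ 2 * x = r ^ 2 / 2 := by
  rw [div_pow, Real.sq_sqrt (by positivity)]
  field_simp

lemma three_le_card_union_of_ne {α : Type*} [LinearOrder α] {a b : α × α} (ha : a.1 < a.2)
    (hb : b.1 < b.2) (hab : b ≠ a) : 3 ≤ ({a.1, a.2} ∪ {b.1, b.2} : Finset α).card := by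
  by_contra! h
  have hsub := eq_of_subset_of_card_le
    (subset_union_left (s₁ := ({a.1, a.2} : Finset α)) (s₂ := {b.1, b.2}))
    (by rw [card_pair ha.ne]; omega)
  have h1 : b.1 ∈ ({a.1, a.2} : Finset α) := hsub ▸ by simp
  have h2 : b.2 ∈ ({a.1, a.2} : Finset α) := hsub ▸ by simp
  simp only [mem_insert, mem_singleton] at h1 h2
  refine hab (Prod.ext ?_ ?_) <;> rcases h1 with h1 | h1 <;> rcases h2 with h2 | h2 <;> order

lemma card_union_eq_four {α : Type*} [DecidableEq α] {a b : α × α} (ha : a.1 ≠ a.2)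
    (hb : b.1 ≠ b.2)
    (hdisj : ¬(b.1 ∈ ({a.1, a.2} : Finset α) ∨ b.2 ∈ ({a.1, a.2} : Finset α))) :
    ({a.1, a.2} ∪ {b.1, b.2} : Finset α).card = 4 := by
  rw [card_union_of_disjoint, card_pair ha, card_pair hb]
  simp only [disjoint_insert_right, disjoint_singleton_right]
  tauto

namespace FinGraph

variable (G : FinGraph) {p : ℝ}

def edges : Finset (Fin G.n × Fin G.n) :=
  univ.filter fun a => G.adj a.1 a.2 = true ∧ a.1 < a.2

def keptEdges (S : Finset (Fin G.n)) : Finset (Fin G.n × Fin G.n) :=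
  G.edges.filter fun a => {a.1, a.2} ⊆ S

lemma card_edges : G.edges.card = G.e := rfl

lemma mem_edges {a : Fin G.n × Fin G.n} :
    a ∈ G.edges ↔ G.adj a.1 a.2 = true ∧ a.1 < a.2 := by
  simp [edges]

lemma keptEdges_univ : G.keptEdges univ = G.edges := by
  simp [keptEdges]

lemma card_keptEdges_le (S : Finset (Fin G.n)) : (G.keptEdges S).card ≤ G.e :=
  card_filter_le _ _

lemma e_induce (S : Finset (Fin G.n)) : (G.induce S).e = (G.keptEdges S).card := by
  set φ := S.orderEmbOfFin rfl
  have hadj : ∀ i j, (G.induce S).adj i j = G.adj (φ i) (φ j) := fun i j => by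
    simp [induce, φ, coe_orderIsoOfFin_apply]
  refine card_nbij (fun a => (φ a.1, φ a.2)) (fun a ha => ?_) (fun a _ b _ h => ?_)
    (fun b hb => ?_)
  · simp only [mem_coe, mem_filter, mem_univ, true_and, hadj] at ha
    simp only [keptEdges, mem_coe, mem_filter, mem_edges, insert_subset_iff, singleton_subset_iff]
    exact ⟨⟨ha.1, φ.lt_iff_lt.2 ha.2⟩, orderEmbOfFin_mem _ _ _, orderEmbOfFin_mem _ _ _⟩
  · simp only [Prod.mk.injEq] at h
    exact Prod.ext (φ.injective h.1) (φ.injective h.2)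
  · simp only [keptEdges, mem_coe, mem_filter, mem_edges, insert_subset_iff,
      singleton_subset_iff] at hb
    obtain ⟨⟨hab, hlt⟩, h1, h2⟩ := hb
    obtain ⟨i, hi⟩ : b.1 ∈ Set.range φ := by rw [range_orderEmbOfFin]; exact h1
    obtain ⟨j, hj⟩ : b.2 ∈ Set.range φ := by rw [range_orderEmbOfFin]; exact h2
    have hij : i < j := φ.lt_iff_lt.1 (by rwa [hi, hj])
    refine ⟨(i, j), ?_, by simp [hi, hj]⟩
    simp only [mem_coe, mem_filter, mem_univ, true_and, hadj, hi, hj, hab]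
    exact hij

/-- A kept edge at `i` is determined by its other endpoint, a kept neighbour of `i`. -/
lemma card_keptEdges_incident {S : Finset (Fin G.n)} {i : Fin G.n} (hi : i ∈ S) :
    ((G.keptEdges S).filter fun a => a.1 = i ∨ a.2 = i).card = keptNbrCount G S i := by
  refine card_nbij' (fun a => if a.1 = i then a.2 else a.1)
    (fun j => if i < j then (i, j) else (j, i)) ?_ ?_ ?_ ?_
  · rintro a ha
    simp only [keptEdges, mem_coe, mem_filter, mem_edges, insert_subset_iff,
      singleton_subset_iff] at ha
    obtain ⟨⟨⟨hadj, hlt⟩, h1, h2⟩, rfl | rfl⟩ := ha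
    · simp [hadj, hlt.ne', h2]
    · simp [hlt.ne, h1, G.symm, hadj]
  · rintro j hj
    simp only [mem_coe, mem_filter, mem_univ, true_and] at hj
    obtain ⟨hadj, hne, hj⟩ := hj
    rcases lt_or_gt_of_ne hne with h | h
    · simp [keptEdges, mem_edges, h, h.not_gt, insert_subset_iff, hi, hj, G.symm, hadj]
    · simp [keptEdges, mem_edges, h, insert_subset_iff, hi, hj, hadj]
  · rintro a ha
    simp only [keptEdges, mem_coe, mem_filter, mem_edges] at ha
    obtain ⟨⟨⟨-, hlt⟩, -⟩, rfl | rfl⟩ := ha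
    · simp [hlt]
    · simp [hlt.ne, hlt.not_gt]
  · rintro j hj
    simp only [mem_coe, mem_filter, mem_univ, true_and] at hj
    rcases lt_or_gt_of_ne hj.2.1 with h | h
    · simp [h.not_gt, h.ne]
    · simp [h]

lemma keptNbrCount_univ (i : Fin G.n) : keptNbrCount G univ i = G.deg i := by
  simp [keptNbrCount, deg]

lemma card_edges_incident (i : Fin G.n) :
    (G.edges.filter fun a => a.1 = i ∨ a.2 = i).card = G.deg i := by
  rw [← keptEdges_univ, card_keptEdges_incident G (mem_univ i), keptNbrCount_univ]

lemma keptNbrCount_le {S : Finset (Fin G.n)} {i : Fin G.n} (hi : i ∈ S) :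
    keptNbrCount G S i ≤ (G.keptEdges S).card :=
  G.card_keptEdges_incident hi ▸ card_filter_le _ _

lemma deg_le_e (i : Fin G.n) : G.deg i ≤ G.e := by
  simpa [keptNbrCount_univ, keptEdges_univ, card_edges] using G.keptNbrCount_le (mem_univ i)

lemma sum_keptNbrCount (S : Finset (Fin G.n)) :
    ∑ i ∈ S, keptNbrCount G S i = 2 * (G.keptEdges S).card := by
  calc ∑ i ∈ S, keptNbrCount G S i
      = ∑ i ∈ S, ((G.keptEdges S).filter fun a => a.1 = i ∨ a.2 = i).card :=
        (sum_congr rfl fun i hi => (G.card_keptEdges_incident hi).symm)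
    _ = ∑ a ∈ G.keptEdges S, (S.filter fun i => a.1 = i ∨ a.2 = i).card :=
        sum_card_bipartiteAbove_eq_sum_card_bipartiteBelow _
    _ = ∑ a ∈ G.keptEdges S, 2 := sum_congr rfl fun a ha => by
        simp only [keptEdges, mem_filter, mem_edges, insert_subset_iff, singleton_subset_iff] at ha
        obtain ⟨⟨-, hlt⟩, h1, h2⟩ := ha
        have : (S.filter fun i => a.1 = i ∨ a.2 = i) = {a.1, a.2} := by
          ext i; simp only [mem_filter, mem_insert, mem_singleton]; aesop
        rw [this, card_pair hlt.ne]
    _ = 2 * (G.keptEdges S).card := by rw [sum_const, smul_eq_mul, mul_comm]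

lemma card_edges_meeting_le (H : Finset (Fin G.n)) :
    (G.edges.filter fun a => a.1 ∈ H ∨ a.2 ∈ H).card ≤ ∑ i ∈ H, G.deg i := by
  calc _ ≤ (H.biUnion fun i => G.edges.filter fun a => a.1 = i ∨ a.2 = i).card := by
        refine card_le_card fun a ha => ?_
        simp only [mem_filter, mem_biUnion] at ha ⊢
        rcases ha with ⟨ha, h | h⟩
        exacts [⟨a.1, h, ha, Or.inl rfl⟩, ⟨a.2, h, ha, Or.inr rfl⟩]
    _ ≤ ∑ i ∈ H, G.deg i :=
        card_biUnion_le.trans (sum_le_sum fun i _ => (G.card_edges_incident i).le)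

noncomputable def sampleExp (p : ℝ) (f : Finset (Fin G.n) → ℝ) : ℝ :=
  ∑ S ∈ (univ : Finset (Fin G.n)).powerset, sampleWeight G p S * f S

lemma sampleWeight_nonneg (hp : 0 ≤ p) (S : Finset (Fin G.n)) : 0 ≤ sampleWeight G p S :=
  mul_nonneg (pow_nonneg (le_min hp zero_le_one) _)
    (pow_nonneg (sub_nonneg.2 (min_le_right p 1)) _)

lemma sampleExp_mono (hp : 0 ≤ p) {f g : Finset (Fin G.n) → ℝ} (h : ∀ S, f S ≤ g S) :
    G.sampleExp p f ≤ G.sampleExp p g :=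
  sum_le_sum fun S _ => mul_le_mul_of_nonneg_left (h S) (G.sampleWeight_nonneg hp S)

lemma sampleExp_nonneg (hp : 0 ≤ p) {f : Finset (Fin G.n) → ℝ} (h : ∀ S, 0 ≤ f S) :
    0 ≤ G.sampleExp p f :=
  sum_nonneg fun S _ => mul_nonneg (G.sampleWeight_nonneg hp S) (h S)

lemma sampleExp_sub (f g : Finset (Fin G.n) → ℝ) :
    G.sampleExp p (fun S => f S - g S) = G.sampleExp p f - G.sampleExp p g := by
  simp only [sampleExp, mul_sub, sum_sub_distrib]

lemma sampleExp_const_mul (c : ℝ) (f : Finset (Fin G.n) → ℝ) :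
    G.sampleExp p (fun S => c * f S) = c * G.sampleExp p f := by
  simp only [sampleExp, mul_sum]
  exact sum_congr rfl fun S _ => by ring

lemma sampleExp_add (f g : Finset (Fin G.n) → ℝ) :
    G.sampleExp p (fun S => f S + g S) = G.sampleExp p f + G.sampleExp p g := by
  simp only [sampleExp, mul_add, sum_add_distrib]

lemma sampleExp_sum {ι : Type*} (F : Finset ι) (f : ι → Finset (Fin G.n) → ℝ) :
    G.sampleExp p (fun S => ∑ a ∈ F, f a S) = ∑ a ∈ F, G.sampleExp p (f a) := by
  simp only [sampleExp, mul_sum]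
  exact sum_comm

/-- The inclusion probability of a vertex set: expand `∏ᵢ (q + (1 - q)·[i ∉ T])`. -/
lemma sampleExp_indicator_subset (T : Finset (Fin G.n)) :
    G.sampleExp p (fun S => if T ⊆ S then 1 else 0) = min p 1 ^ T.card := by
  set q := min p 1
  have hterm : ∀ S ∈ (univ : Finset (Fin G.n)).powerset,
      sampleWeight G p S * (if T ⊆ S then 1 else 0) =
        (∏ _i ∈ S, q) * ∏ i ∈ univ \ S, (if i ∈ T then 0 else 1 - q) := by
    intro S _
    by_cases hTS : T ⊆ S
    · have : ∀ i ∈ univ \ S, (if i ∈ T then (0 : ℝ) else 1 - q) = 1 - q := fun i hi =>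
        if_neg fun hiT => (mem_sdiff.1 hi).2 (hTS hiT)
      rw [if_pos hTS, mul_one, prod_congr rfl this, prod_const, prod_const,
        card_sdiff_of_subset (subset_univ S), card_univ, Fintype.card_fin]
      rfl
    · obtain ⟨i, hiT, hiS⟩ := not_subset.1 hTS
      have hi : i ∈ univ \ S := mem_sdiff.2 ⟨mem_univ i, hiS⟩
      rw [if_neg hTS, mul_zero, Finset.prod_eq_zero hi (by simp [hiT]), mul_zero]
  rw [sampleExp, sum_congr rfl hterm, ← prod_add]
  have : ∀ i ∈ (univ : Finset (Fin G.n)),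
      (q + if i ∈ T then 0 else 1 - q) = if i ∈ T then q else 1 := fun i _ => by
    split_ifs <;> ring
  rw [prod_congr rfl this, prod_ite_mem, univ_inter, prod_const]

lemma sampleExp_card_filter_subset {ι : Type*} (F : Finset ι) (T : ι → Finset (Fin G.n))
    {m : ℕ} (hT : ∀ a ∈ F, (T a).card = m) :
    G.sampleExp p (fun S => ((F.filter fun a => T a ⊆ S).card : ℝ)) = min p 1 ^ m * F.card := by
  simp_rw [← sum_boole]
  rw [G.sampleExp_sum, sum_congr rfl fun a ha => by rw [G.sampleExp_indicator_subset, hT a ha],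
    sum_const, nsmul_eq_mul, mul_comm]

lemma expEdgeTail_eq (M : ℝ) : expEdgeTail G p M = G.sampleExp p fun S =>
    if M < ((G.keptEdges S).card : ℝ) then ((G.keptEdges S).card : ℝ) else 0 := by
  simp only [expEdgeTail, sampleExp, e_induce]

lemma expEdgeTail_nonneg (hp : 0 ≤ p) (M : ℝ) : 0 ≤ expEdgeTail G p M := by
  rw [expEdgeTail_eq]
  exact G.sampleExp_nonneg hp fun S => by split_ifs <;> positivity

lemma expEdgeTail_antitone (hp : 0 ≤ p) : Antitone (expEdgeTail G p) := by
  intro M M' hMM'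
  simp only [expEdgeTail_eq]
  refine G.sampleExp_mono hp fun S => ?_
  split_ifs with h h' <;> first | positivity | exact le_rfl | exact absurd (hMM'.trans_lt h) h'

lemma sampleExp_keptNbrCount (i : Fin G.n) :
    G.sampleExp p (fun S => if i ∈ S then (keptNbrCount G S i : ℝ) else 0) =
      min p 1 ^ 2 * G.deg i := by
  have hcount : ∀ S, (if i ∈ S then (keptNbrCount G S i : ℝ) else 0) =
      (((univ.filter fun j => G.adj i j = true ∧ j ≠ i).filter fun j => {i, j} ⊆ S).card :
        ℝ) := by
    intro S
    by_cases hi : i ∈ S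
    · simp [hi, keptNbrCount, filter_filter, insert_subset_iff, and_assoc]
    · simp [hi, insert_subset_iff]
  simp_rw [hcount]
  exact G.sampleExp_card_filter_subset _ _ fun j hj => card_pair (mem_filter.1 hj).2.2.symm

/-- Each kept neighbour count is at most `X`, the number of kept edges, and they sum to `2X`. -/
lemma half_sum_keptNbrCount_sub_le {M : ℝ} (hM : 0 ≤ M) (H S : Finset (Fin G.n)) :
    1 / 2 * ∑ i ∈ H, (if i ∈ S then (keptNbrCount G S i : ℝ) - M else 0) ≤
      if M < ((G.keptEdges S).card : ℝ) then ((G.keptEdges S).card : ℝ) else 0 := by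
  have hD : ∀ i ∈ S, (keptNbrCount G S i : ℝ) ≤ (G.keptEdges S).card := fun i hi => by
    exact_mod_cast G.keptNbrCount_le hi
  set X : ℝ := ((G.keptEdges S).card : ℝ)
  split_ifs with hMX
  · calc 1 / 2 * ∑ i ∈ H, (if i ∈ S then (keptNbrCount G S i : ℝ) - M else 0)
        ≤ 1 / 2 * ∑ i ∈ H ∩ S, (keptNbrCount G S i : ℝ) := by
          rw [← sum_ite_mem]
          gcongr with i
          split_ifs <;> linarith
      _ ≤ 1 / 2 * ∑ i ∈ S, (keptNbrCount G S i : ℝ) := by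
          gcongr
          exact inter_subset_right
      _ = X := by
          rw [← Nat.cast_sum, G.sum_keptNbrCount S]
          push_cast
          ring
  · have : ∀ i ∈ H, (if i ∈ S then (keptNbrCount G S i : ℝ) - M else 0) ≤ 0 := by
      intro i _
      split_ifs with hi
      · linarith [hD i hi]
      · exact le_rfl
    linarith [sum_nonpos this]

lemma half_sum_le_expEdgeTail (hp : 0 ≤ p) {M : ℝ} (hM : 0 ≤ M) (H : Finset (Fin G.n)) :
    1 / 2 * ∑ i ∈ H, (min p 1 ^ 2 * G.deg i - M * min p 1) ≤ expEdgeTail G p M := by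
  have hexp : ∀ i,
      G.sampleExp p (fun S => if i ∈ S then (keptNbrCount G S i : ℝ) - M else 0) =
        min p 1 ^ 2 * G.deg i - M * min p 1 := fun i => by
    have : (fun S => if i ∈ S then (keptNbrCount G S i : ℝ) - M else 0) = fun S =>
        (if i ∈ S then (keptNbrCount G S i : ℝ) else 0) - M * if {i} ⊆ S then 1 else 0 := by
      funext S
      by_cases hi : i ∈ S <;> simp [hi]
    rw [this, sampleExp_sub, sampleExp_const_mul, sampleExp_keptNbrCount,
      sampleExp_indicator_subset, card_singleton, pow_one]
  calc _ = G.sampleExp p fun S =>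
        1 / 2 * ∑ i ∈ H, (if i ∈ S then (keptNbrCount G S i : ℝ) - M else 0) := by
        rw [sampleExp_const_mul, sampleExp_sum]
        simp only [hexp]
    _ ≤ expEdgeTail G p M := by
        rw [expEdgeTail_eq]
        exact G.sampleExp_mono hp (G.half_sum_keptNbrCount_sub_le hM H)

lemma sum_pow_card_union_le {q : ℝ} (hq0 : 0 ≤ q) (hq1 : q ≤ 1) {a : Fin G.n × Fin G.n}
    (ha : a ∈ G.edges) :
    ∑ b ∈ G.edges, q ^ ({a.1, a.2} ∪ {b.1, b.2} : Finset (Fin G.n)).card ≤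
      q ^ 2 + q ^ 3 * (G.deg a.1 + G.deg a.2) + q ^ 4 * G.e := by
  set A : Finset (Fin G.n) := {a.1, a.2}
  have hlt : a.1 < a.2 := (G.mem_edges.1 ha).2
  have hterm : ∀ b ∈ G.edges, q ^ (A ∪ {b.1, b.2}).card ≤
      (if b = a then q ^ 2 else 0) + (if b.1 ∈ A ∨ b.2 ∈ A then q ^ 3 else 0) + q ^ 4 := by
    intro b hb
    have hblt : b.1 < b.2 := (G.mem_edges.1 hb).2
    have := pow_nonneg hq0 3
    have := pow_nonneg hq0 4
    by_cases hba : b = a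
    · subst hba
      simp only [A, union_self, card_pair hlt.ne, if_true, mem_insert, mem_singleton, true_or]
      linarith
    by_cases hmeet : b.1 ∈ A ∨ b.2 ∈ A
    · simp only [hba, hmeet, if_true, if_false, zero_add]
      linarith [pow_le_pow_of_le_one hq0 hq1 (three_le_card_union_of_ne hlt hblt hba)]
    · rw [card_union_eq_four hlt.ne hblt.ne hmeet, if_neg hba, if_neg hmeet, zero_add, zero_add]
  have hmeet :
      ((G.edges.filter fun b => b.1 ∈ A ∨ b.2 ∈ A).card : ℝ) ≤ G.deg a.1 + G.deg a.2 := by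
    have := G.card_edges_meeting_le A
    rw [sum_pair hlt.ne] at this
    exact_mod_cast this
  calc _ ≤ ∑ b ∈ G.edges,
        ((if b = a then q ^ 2 else 0) + (if b.1 ∈ A ∨ b.2 ∈ A then q ^ 3 else 0) + q ^ 4) :=
        sum_le_sum hterm
    _ = q ^ 2 + q ^ 3 * (G.edges.filter fun b => b.1 ∈ A ∨ b.2 ∈ A).card + q ^ 4 * G.e := by
        rw [sum_add_distrib, sum_add_distrib, sum_ite_eq' _ _ _, if_pos ha, ← sum_filter,
          sum_const, sum_const, card_edges]
        simp only [nsmul_eq_mul]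
        ring
    _ ≤ q ^ 2 + q ^ 3 * (G.deg a.1 + G.deg a.2) + q ^ 4 * G.e := by
        gcongr

lemma sampleExp_card_mul_card (F F' : Finset (Fin G.n × Fin G.n)) :
    G.sampleExp p (fun S => ((F.filter fun a => {a.1, a.2} ⊆ S).card : ℝ) *
        (F'.filter fun b => {b.1, b.2} ⊆ S).card) =
      ∑ a ∈ F, ∑ b ∈ F', min p 1 ^ ({a.1, a.2} ∪ {b.1, b.2} : Finset (Fin G.n)).card := by
  have hprod : ∀ S : Finset (Fin G.n), ((F.filter fun a => {a.1, a.2} ⊆ S).card : ℝ) *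
      (F'.filter fun b => {b.1, b.2} ⊆ S).card =
        ∑ a ∈ F, ∑ b ∈ F',
          if ({a.1, a.2} ∪ {b.1, b.2} : Finset (Fin G.n)) ⊆ S then 1 else 0 := by
    intro S
    simp only [← sum_boole, sum_mul_sum, union_subset_iff, ite_zero_mul_ite_zero, mul_one]
  simp only [hprod, sampleExp_sum, sampleExp_indicator_subset]

lemma expEdgeTail_le_meeting_add (hp : 0 ≤ p) {M : ℝ} (hM : 0 < M) (H : Finset (Fin G.n)) :
    expEdgeTail G p M ≤ min p 1 ^ 2 * (G.edges.filter fun a => a.1 ∈ H ∨ a.2 ∈ H).card +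
      M⁻¹ * ∑ a ∈ G.edges.filter (fun a => ¬(a.1 ∈ H ∨ a.2 ∈ H)), ∑ b ∈ G.edges,
        min p 1 ^ ({a.1, a.2} ∪ {b.1, b.2} : Finset (Fin G.n)).card := by
  set P : Fin G.n × Fin G.n → Prop := fun a => a.1 ∈ H ∨ a.2 ∈ H
  have hsplit : ∀ S, ((G.keptEdges S).card : ℝ) =
      ((G.edges.filter fun a => ¬P a).filter fun a => {a.1, a.2} ⊆ S).card +
        ((G.edges.filter P).filter fun a => {a.1, a.2} ⊆ S).card := fun S => by
    rw [← card_filter_add_card_filter_not (s := G.keptEdges S) (p := P), keptEdges,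
      filter_comm (p := fun a => {a.1, a.2} ⊆ S) (q := P),
      filter_comm (p := fun a => {a.1, a.2} ⊆ S) (q := fun a => ¬P a)]
    push_cast
    ring
  have hZ := G.sampleExp_card_filter_subset (p := p) (G.edges.filter P) (fun a => {a.1, a.2})
    (m := 2) fun a ha => card_pair (G.mem_edges.1 (mem_filter.1 ha).1).2.ne
  rw [expEdgeTail_eq, ← hZ, ← G.sampleExp_card_mul_card, ← sampleExp_const_mul,
    ← sampleExp_add]
  refine G.sampleExp_mono hp fun S => ?_
  change _ ≤ _ + M⁻¹ * (_ * ((G.keptEdges S).card : ℝ))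
  rw [hsplit S]
  exact ite_lt_le_add_inv_mul (by positivity) (by positivity) hM

lemma tailDegSum_eq (k : ℝ) :
    tailDegSum G k = ∑ i ∈ univ.filter fun i => k * √(G.e : ℝ) < G.deg i, (G.deg i : ℝ) :=
  (sum_filter _ _).symm

lemma tailDegSum_eq_zero {k : ℝ} (hk : √(G.e : ℝ) ≤ k) : tailDegSum G k = 0 := by
  refine sum_eq_zero fun i _ => if_neg (not_lt.2 ?_)
  calc (G.deg i : ℝ) ≤ G.e := by exact_mod_cast G.deg_le_e i
    _ = √(G.e : ℝ) * √(G.e : ℝ) := (Real.mul_self_sqrt (Nat.cast_nonneg _)).symm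
    _ ≤ k * √(G.e : ℝ) := by gcongr

lemma expEdgeTail_eq_zero {M : ℝ} (hM : (G.e : ℝ) ≤ M) : expEdgeTail G p M = 0 := by
  rw [expEdgeTail_eq]
  refine sum_eq_zero fun S _ => mul_eq_zero_of_right _ (if_neg (not_lt.2 ?_))
  exact le_trans (by exact_mod_cast G.card_keptEdges_le S) hM

lemma expEdgeTail_le_of_deg_le (hp : 0 ≤ p) {K M : ℝ} (hK : 0 ≤ K) (hM : 0 < M) :
    expEdgeTail G p M ≤
      min p 1 ^ 2 * ∑ i ∈ univ.filter (fun i => K < G.deg i), (G.deg i : ℝ) +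
        M⁻¹ * (G.e * (min p 1 ^ 2 + 2 * min p 1 ^ 3 * K + min p 1 ^ 4 * G.e)) := by
  set q := min p 1
  have hq0 : 0 ≤ q := le_min hp zero_le_one
  set H := univ.filter fun i => K < (G.deg i : ℝ)
  have hmeet :
      ((G.edges.filter fun a => a.1 ∈ H ∨ a.2 ∈ H).card : ℝ) ≤ ∑ i ∈ H, (G.deg i : ℝ) :=
    mod_cast G.card_edges_meeting_le H
  have hrest : ∀ a ∈ G.edges.filter (fun a => ¬(a.1 ∈ H ∨ a.2 ∈ H)),
      ∑ b ∈ G.edges, q ^ ({a.1, a.2} ∪ {b.1, b.2} : Finset (Fin G.n)).card ≤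
        q ^ 2 + 2 * q ^ 3 * K + q ^ 4 * G.e := fun a ha => by
    simp only [mem_filter, H, mem_univ, true_and, not_or, not_lt] at ha
    obtain ⟨ha, h1, h2⟩ := ha
    calc _ ≤ q ^ 2 + q ^ 3 * (G.deg a.1 + G.deg a.2) + q ^ 4 * G.e :=
          G.sum_pow_card_union_le hq0 (min_le_right p 1) ha
      _ ≤ q ^ 2 + 2 * q ^ 3 * K + q ^ 4 * G.e := by nlinarith [pow_nonneg hq0 3]
  have hcard : ((G.edges.filter fun a => ¬(a.1 ∈ H ∨ a.2 ∈ H)).card : ℝ) ≤ G.e := by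
    exact_mod_cast (card_filter_le _ _).trans_eq G.card_edges
  calc expEdgeTail G p M ≤ _ := G.expEdgeTail_le_meeting_add hp hM H
    _ ≤ q ^ 2 * ∑ i ∈ H, (G.deg i : ℝ) +
        M⁻¹ * (G.e * (q ^ 2 + 2 * q ^ 3 * K + q ^ 4 * G.e)) := by
      gcongr
      calc _ ≤ ∑ a ∈ G.edges.filter (fun a => ¬(a.1 ∈ H ∨ a.2 ∈ H)),
            (q ^ 2 + 2 * q ^ 3 * K + q ^ 4 * G.e) := sum_le_sum hrest
        _ ≤ _ := by
          rw [sum_const, nsmul_eq_mul]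
          gcongr

lemma expEdgeTail_le_of_tailDegSum {r k M : ℝ} (hr : 0 ≤ r) (hk : 0 ≤ k) (hM : 0 < M) :
    expEdgeTail G (r / √(2 * G.e)) M ≤
      r ^ 2 / 2 * (1 / G.e * tailDegSum G k) + M⁻¹ * (r ^ 2 / 2 + k * r ^ 3 + r ^ 4 / 4) := by
  have hT : 0 ≤ tailDegSum G k := sum_nonneg fun i _ => by split_ifs <;> positivity
  rcases (G.e).eq_zero_or_pos with he | he
  · rw [G.expEdgeTail_eq_zero (by rw [he, Nat.cast_zero]; exact hM.le)]
    positivity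
  set e : ℝ := (G.e : ℝ)
  have he : 0 < e := Nat.cast_pos.2 he
  set p := r / √(2 * e)
  set q := min p 1
  have hp0 : 0 ≤ p := by positivity
  have hq0 : 0 ≤ q := le_min hp0 zero_le_one
  have hqp : q ≤ p := min_le_left p 1
  have hp2 : p ^ 2 * e = r ^ 2 / 2 := div_sqrt_two_mul_sq_mul he
  have hpe : p * √e ≤ r := le_of_sq_le_sq (by
    rw [mul_pow, Real.sq_sqrt he.le, hp2]; linarith [sq_nonneg r]) hr
  have hbound := G.expEdgeTail_le_of_deg_le hp0 (K := k * √e) (by positivity) hM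
  rw [← tailDegSum_eq] at hbound
  refine hbound.trans (add_le_add ?_ (mul_le_mul_of_nonneg_left ?_ (inv_nonneg.2 hM.le)))
  · calc q ^ 2 * tailDegSum G k ≤ p ^ 2 * tailDegSum G k := by gcongr
      _ = r ^ 2 / 2 * (1 / e * tailDegSum G k) := by rw [← hp2]; field_simp
  · calc e * (q ^ 2 + 2 * q ^ 3 * (k * √e) + q ^ 4 * e)
        ≤ e * (p ^ 2 + 2 * p ^ 3 * (k * √e) + p ^ 4 * e) := by gcongr
      _ = p ^ 2 * e + k * (2 * (p ^ 2 * e)) * (p * √e) + (p ^ 2 * e) ^ 2 := by ring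
      _ ≤ r ^ 2 / 2 + k * r ^ 3 + r ^ 4 / 4 := by
        rw [hp2]
        nlinarith [mul_le_mul_of_nonneg_left hpe (by positivity : 0 ≤ k * r ^ 2)]

lemma sum_deg_le_expEdgeTail_of_le (hp : 0 ≤ p) {K M : ℝ} (hM : 0 ≤ M)
    (hK : 2 * M ≤ min p 1 * K) :
    min p 1 ^ 2 / 4 * ∑ i ∈ univ.filter (fun i => K < G.deg i), (G.deg i : ℝ) ≤
      expEdgeTail G p M := by
  set q := min p 1
  have hq0 : 0 ≤ q := le_min hp zero_le_one
  set H := univ.filter fun i => K < (G.deg i : ℝ)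
  have hH : ∀ i ∈ H, q ^ 2 / 2 * G.deg i ≤ q ^ 2 * G.deg i - M * q := fun i hi => by
    have : 2 * M ≤ q * G.deg i := hK.trans (by gcongr; exact (mem_filter.1 hi).2.le)
    nlinarith
  calc q ^ 2 / 4 * ∑ i ∈ H, (G.deg i : ℝ) = 1 / 2 * ∑ i ∈ H, q ^ 2 / 2 * G.deg i := by
        rw [← mul_sum]; ring
    _ ≤ 1 / 2 * ∑ i ∈ H, (q ^ 2 * G.deg i - M * q) := by gcongr with i hi; exact hH i hi
    _ ≤ expEdgeTail G p M := G.half_sum_le_expEdgeTail hp hM H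

lemma tailDegSum_le_of_expEdgeTail {r M : ℝ} (hr : 0 < r) (hM : 0 ≤ M) :
    1 / G.e * tailDegSum G (r + 4 * M / r) ≤ 8 / r ^ 2 * expEdgeTail G (r / √(2 * G.e)) M := by
  set e : ℝ := (G.e : ℝ)
  set k := r + 4 * M / r
  set p := r / √(2 * e)
  by_cases hsmall : √(2 * e) ≤ r
  · have hk : √e ≤ k := calc
      √e ≤ √(2 * e) := Real.sqrt_le_sqrt (by linarith [Nat.cast_nonneg (α := ℝ) G.e])
      _ ≤ r := hsmall
      _ ≤ k := le_add_of_nonneg_right (by positivity)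
    rw [G.tailDegSum_eq_zero hk, mul_zero]
    have := G.expEdgeTail_nonneg (p := p) (by positivity) M
    positivity
  have he : 0 < e := by
    by_contra! h
    exact hsmall (by simp [le_antisymm h (Nat.cast_nonneg _), hr.le])
  have hp1 : min p 1 = p := min_eq_left ((div_le_one (by positivity)).2 (not_le.1 hsmall).le)
  have hp2 : p ^ 2 * e = r ^ 2 / 2 := div_sqrt_two_mul_sq_mul he
  have hpe : r / 2 ≤ p * √e := le_of_sq_le_sq (by
    rw [mul_pow, Real.sq_sqrt he.le, hp2]; nlinarith) (by positivity)
  have hK : 2 * M ≤ min p 1 * (k * √e) := calc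
    2 * M = 4 * M / r * (r / 2) := by field_simp; ring
    _ ≤ k * (p * √e) := by gcongr; exact le_add_of_nonneg_left hr.le
    _ = min p 1 * (k * √e) := by rw [hp1]; ring
  have hlow := G.sum_deg_le_expEdgeTail_of_le (by positivity) hM hK
  rw [← tailDegSum_eq, hp1] at hlow
  calc 1 / e * tailDegSum G k = 8 / r ^ 2 * (p ^ 2 / 4 * tailDegSum G k) := by
        rw [show p ^ 2 = r ^ 2 / 2 / e by rw [← hp2]; field_simp]
        field_simp
        ring
    _ ≤ 8 / r ^ 2 * expEdgeTail G p M := by gcongr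

end FinGraph

theorem stmt4_general (G : ℕ → FinGraph) (r : ℝ) (hr : 0 < r) :
    (∀ ε : ℝ, 0 < ε → ∃ M : ℝ, ∀ j,
        expEdgeTail (G j) (r / Real.sqrt (2 * ((G j).e : ℝ))) M ≤ ε) ↔
      UniformlySamplingRegular G := by
  constructor
  · intro hui ε hε
    obtain ⟨M, hM⟩ := hui (ε * r ^ 2 / 16) (by positivity)
    refine ⟨r + 4 * max M 0 / r, by positivity, fun j => ?_⟩
    calc 1 / ((G j).e : ℝ) * tailDegSum (G j) (r + 4 * max M 0 / r)
        ≤ 8 / r ^ 2 * expEdgeTail (G j) (r / √(2 * (G j).e)) (max M 0) :=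
          (G j).tailDegSum_le_of_expEdgeTail hr (le_max_right M 0)
      _ ≤ 8 / r ^ 2 * (ε * r ^ 2 / 16) := by
          gcongr
          exact ((G j).expEdgeTail_antitone (by positivity) (le_max_left M 0)).trans (hM j)
      _ < ε := by field_simp; linarith
  · intro husr ε hε
    obtain ⟨k, hk, hkT⟩ := husr (ε / r ^ 2) (by positivity)
    set C := r ^ 2 / 2 + k * r ^ 3 + r ^ 4 / 4
    have hC : 0 < C := by positivity
    refine ⟨2 * C / ε, fun j => ?_⟩
    calc expEdgeTail (G j) (r / √(2 * (G j).e)) (2 * C / ε)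
        ≤ r ^ 2 / 2 * (1 / (G j).e * tailDegSum (G j) k) + (2 * C / ε)⁻¹ * C :=
          (G j).expEdgeTail_le_of_tailDegSum hr.le hk.le (by positivity)
      _ ≤ r ^ 2 / 2 * (ε / r ^ 2) + (2 * C / ε)⁻¹ * C := by gcongr; exact (hkT j).le
      _ = ε := by field_simp; ring

/-- For a sequence of finite graphs with `e(G_j) → ∞`, `r > 0` and
`p_j = r/√(2e(G_j))`, the family of edge counts `e(S_{p_j}(G_j))` of the `p_j`-sampled
subgraphs is uniformly integrable iff the sequence is uniformly sampling regular. -/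
theorem stmt4 (G : ℕ → FinGraph) (r : ℝ) (hr : 0 < r)
    (he : Tendsto (fun j => ((G j).e : ℝ)) atTop atTop) :
    (∀ ε : ℝ, 0 < ε → ∃ M : ℝ, ∀ j,
        expEdgeTail (G j) (r / Real.sqrt (2 * ((G j).e : ℝ))) M ≤ ε) ↔
      UniformlySamplingRegular G :=
  stmt4_general G r hr
end

section
/- Let G be a finite loopless graph with e non-loop edges, and let 0 < q ≤ p ≤ 1. Then the total variation distance between the law of the p-sampling S_p(G) and the law of the q-sampling S_q(G) is at most 2·e·p·(p − q); equivalently, for p,q ∈ (0,1] the distance is at most 2·p·q·e·max(p/q − 1, q/p − 1). -/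
open Filter Finset
open scoped Classical ENNReal

/-!
Couple the two samplings through one labelling `σ` of the vertices by independent labels in
`{0, 1, 2}` with probabilities `1 - p`, `q`, `p - q`: the `p`-sample is `{σ ≠ 0}` and the
`q`-sample is `{σ = 1}`. If no edge joins a vertex of label `2` to the `p`-sample, the label-`2`
vertices are isolated in the induced `p`-sample, so after discarding isolated vertices the two
samples coincide. By the coupling inequality the distance is therefore at most the probability
of an ordered edge `(u, v)` with `σ u = 2` and `σ v ≠ 0`, and the union bound over the `2e`
ordered edges gives `2e (p - q) p`.
-/

section ProductWeight

variable {ι κ : Type*} [Fintype ι] [DecidableEq ι] [Fintype κ] (v : κ → ℝ)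

theorem sum_prod_mul_prod (g : ι → κ → ℝ) :
    ∑ σ : ι → κ, (∏ i, v (σ i)) * ∏ i, g i (σ i) = ∏ i, ∑ k, v k * g i k := by
  simp_rw [← Finset.prod_mul_distrib]
  exact (Fintype.prod_sum fun i k => v k * g i k).symm

theorem sum_prod_mul_filter (hv : ∑ k, v k = 1) (P : κ → Prop) [DecidablePred P]
    (F : Finset ι → ℝ) :
    ∑ σ : ι → κ, (∏ i, v (σ i)) * F {i | P (σ i)} =
      ∑ S : Finset ι, (∑ k with P k, v k) ^ #S *
        (1 - ∑ k with P k, v k) ^ (Fintype.card ι - #S) * F S := by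
  have hF : ∀ σ : ι → κ, F {i | P (σ i)} =
      ∑ S : Finset ι, (∏ i, if (P (σ i) ↔ i ∈ S) then 1 else 0) * F S := by
    intro σ
    have hfilter : ∀ S : Finset ι,
        (∀ i ∈ univ, P (σ i) ↔ i ∈ S) ↔ ({i | P (σ i)} : Finset ι) = S := by
      intro S
      simp [Finset.ext_iff]
    simp_rw [Finset.prod_boole, hfilter, ite_mul, one_mul, zero_mul, Finset.sum_ite_eq]
    simp
  have hcoord : ∀ (S : Finset ι) (i : ι),
      ∑ k, v k * (if (P k ↔ i ∈ S) then 1 else 0) =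
        if i ∈ S then ∑ k with P k, v k else 1 - ∑ k with P k, v k := by
    intro S i
    by_cases hi : i ∈ S
    · simp [hi, Finset.sum_filter]
    · simp only [hi, iff_false, if_false, mul_ite, mul_one, mul_zero]
      rw [← Finset.sum_filter, eq_sub_iff_add_eq', Finset.sum_filter_add_sum_filter_not, hv]
  calc ∑ σ : ι → κ, (∏ i, v (σ i)) * F {i | P (σ i)}
      = ∑ S : Finset ι, (∑ σ : ι → κ,
          (∏ i, v (σ i)) * ∏ i, if (P (σ i) ↔ i ∈ S) then 1 else 0) * F S := by
        simp_rw [hF, Finset.mul_sum, Finset.sum_mul, ← mul_assoc]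
        exact Finset.sum_comm
    _ = _ := by
        refine Finset.sum_congr rfl fun S _ => ?_
        rw [sum_prod_mul_prod v (fun i k => if (P k ↔ i ∈ S) then 1 else 0)]
        simp_rw [hcoord, Finset.prod_ite, Finset.prod_const]
        simp [Finset.filter_not, Finset.card_sdiff]

theorem sum_prod_mul_ite_and (hv : ∑ k, v k = 1) {i j : ι} (hij : i ≠ j)
    (P Q : κ → Prop) [DecidablePred P] [DecidablePred Q] :
    ∑ σ : ι → κ, (∏ l, v (σ l)) * (if P (σ i) ∧ Q (σ j) then 1 else 0) =
      (∑ k with P k, v k) * ∑ k with Q k, v k := by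
  set g : ι → κ → ℝ := fun l k =>
    if l = i then (if P k then 1 else 0) else if l = j then (if Q k then 1 else 0) else 1
  have hpair : ∀ f : ι → ℝ, (∀ l, l ≠ i → l ≠ j → f l = 1) → ∏ l, f l = f i * f j :=
    fun f hf => Finset.prod_eq_mul i j hij (fun l _ hl => hf l hl.1 hl.2) (by simp) (by simp)
  have hg : ∀ σ : ι → κ, (if P (σ i) ∧ Q (σ j) then 1 else 0) = ∏ l, g l (σ l) := by
    intro σ
    rw [hpair _ fun l hi hj => by simp [g, hi, hj]]
    by_cases hP : P (σ i) <;> by_cases hQ : Q (σ j) <;> simp [g, hij.symm, hP, hQ]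
  simp_rw [hg, sum_prod_mul_prod]
  rw [hpair _ fun l hi hj => by simp [g, hi, hj, hv]]
  simp [g, hij.symm, Finset.sum_filter]

end ProductWeight

namespace FinGraph

variable (G : FinGraph)

def inducedSupport (S : Finset (Fin G.n)) : Finset (Fin G.n) :=
  {u ∈ S | ∃ w ∈ S, G.adj u w = true}

theorem iso_induce_of_equiv {H : FinGraph} {S : Finset (Fin G.n)} {T : Finset (Fin H.n)}
    (φ : S ≃ T) (hφ : ∀ a b : S, G.adj a b = H.adj (φ a) (φ b)) :
    Iso (G.induce S) (H.induce T) :=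
  ⟨(S.orderIsoOfFin rfl).toEquiv.trans (φ.trans (T.orderIsoOfFin rfl).symm.toEquiv),
    fun i j => by
      change G.adj (S.orderIsoOfFin rfl i) (S.orderIsoOfFin rfl j) =
        H.adj (T.orderIsoOfFin rfl ((T.orderIsoOfFin rfl).symm (φ (S.orderIsoOfFin rfl i))))
          (T.orderIsoOfFin rfl ((T.orderIsoOfFin rfl).symm (φ (S.orderIsoOfFin rfl j))))
      simp only [OrderIso.apply_symm_apply, hφ]⟩

theorem cls_core_induce (S : Finset (Fin G.n)) :
    (G.induce S).core.cls = (G.induce (G.inducedSupport S)).cls := by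
  let e : Fin (G.induce S).n ≃ S := (S.orderIsoOfFin rfl).toEquiv
  have he : ∀ i, (∃ j, (G.induce S).adj i j = true) ↔ (e i : Fin G.n) ∈ G.inducedSupport S := by
    intro i
    simp only [inducedSupport, Finset.mem_filter, Finset.coe_mem, true_and]
    exact ⟨fun ⟨j, hj⟩ => ⟨e j, (e j).2, hj⟩,
      fun ⟨w, hw, hadj⟩ => ⟨e.symm ⟨w, hw⟩, by
        show G.adj (e i) (e (e.symm ⟨w, hw⟩)) = true
        rwa [Equiv.apply_symm_apply]⟩⟩
  refine Quot.sound (iso_induce_of_equiv _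
    ((e.subtypeEquiv fun i => by
      simpa only [Finset.mem_filter, Finset.mem_univ, true_and] using he i).trans
      (Equiv.subtypeSubtypeEquivSubtype fun hu => (Finset.mem_filter.1 hu).1)) fun a b => ?_)
  rfl

theorem cls_core_induce_eq_of_subset {S T : Finset (Fin G.n)} (hTS : T ⊆ S)
    (h : ∀ u ∈ S, u ∉ T → ∀ w ∈ S, G.adj u w = false) :
    (G.induce S).core.cls = (G.induce T).core.cls := by
  suffices G.inducedSupport S = G.inducedSupport T by
    rw [cls_core_induce, cls_core_induce, this]
  ext u
  simp only [inducedSupport, Finset.mem_filter]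
  constructor
  · rintro ⟨huS, w, hwS, hadj⟩
    have mem_T : ∀ {a b}, a ∈ S → b ∈ S → G.adj a b = true → a ∈ T := fun ha hb hab => by
      by_contra haT
      simp [h _ ha haT _ hb] at hab
    exact ⟨mem_T huS hwS hadj, w, mem_T hwS huS (G.symm u w ▸ hadj), hadj⟩
  · rintro ⟨huT, w, hwT, hadj⟩
    exact ⟨hTS huT, w, hTS hwT, hadj⟩

def darts : Finset (Fin G.n × Fin G.n) := {z | G.adj z.1 z.2 = true ∧ z.1 ≠ z.2}

theorem card_darts : #G.darts = 2 * G.e := by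
  set E : Finset (Fin G.n × Fin G.n) := {z | G.adj z.1 z.2 = true ∧ z.1 < z.2}
  have hsplit : G.darts = E ∪ E.map (Equiv.prodComm _ _).toEmbedding := by
    ext ⟨a, b⟩
    simp only [darts, E, Finset.mem_union, Finset.mem_map_equiv, Finset.mem_filter,
      Finset.mem_univ, true_and, Equiv.prodComm_symm, Equiv.prodComm_apply, Prod.fst_swap,
      Prod.snd_swap, G.symm b a, ne_iff_lt_or_gt, and_or_left]
  have hdisj : Disjoint E (E.map (Equiv.prodComm _ _).toEmbedding) := by
    rw [Finset.disjoint_left]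
    rintro ⟨a, b⟩ hE hE'
    simp only [E, Finset.mem_map_equiv, Finset.mem_filter] at hE hE'
    exact absurd (hE.2.2.trans hE'.2.2) (lt_irrefl a)
  rw [hsplit, Finset.card_union_of_disjoint hdisj, Finset.card_map, two_mul]
  rfl

end FinGraph

section TotalVariation

theorem tsum_subtype_sum_mul_ite_eq {α ι : Type*} [Fintype ι] (c : ι → ℝ) (m : ι → α)
    (A : Set α) :
    ∑' x : A, ∑ i, c i * (if m i = x then 1 else 0) = ∑ i, c i * (if m i ∈ A then 1 else 0) := by
  refine (hasSum_sum fun i _ => ?_).tsum_eq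
  by_cases h : m i ∈ A
  · convert hasSum_ite_eq (⟨m i, h⟩ : A) (c i) using 1
    · ext x
      simp [Subtype.ext_iff, eq_comm]
    · simp [h]
  · convert hasSum_zero with x
    · have : m i ≠ x := fun hx => h (hx ▸ x.2)
      simp [this]
    · simp [h]

theorem dTV_comm {α : Type*} (f g : α → ℝ) : dTV f g = dTV g f := by
  unfold dTV
  congr 1 with A
  rw [← abs_neg, ← tsum_neg]
  exact congrArg abs (tsum_congr fun x => neg_sub _ _)

theorem abs_sum_sub_le_sum_ne {Ω α : Type*} [Fintype Ω] {w : Ω → ℝ} (hw : ∀ ω, 0 ≤ w ω)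
    (X Y : Ω → α) (A : Set α) :
    |∑ ω, w ω * (if X ω ∈ A then 1 else 0) - ∑ ω, w ω * (if Y ω ∈ A then 1 else 0)| ≤
      ∑ ω, w ω * (if X ω ≠ Y ω then 1 else 0) := by
  rw [← Finset.sum_sub_distrib]
  refine (Finset.abs_sum_le_sum_abs _ _).trans (Finset.sum_le_sum fun ω _ => ?_)
  rw [← mul_sub, abs_mul, abs_of_nonneg (hw ω)]
  refine mul_le_mul_of_nonneg_left ?_ (hw ω)
  by_cases h : X ω = Y ω
  · simp [h]
  · rw [if_pos h]
    split_ifs <;> norm_num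

end TotalVariation

section Coupling

variable (G : FinGraph)

theorem tsum_pSampleLaw_sub (p q : ℝ) (A : Set UGraph) :
    ∑' x : A, (pSampleLaw G p x - pSampleLaw G q x) =
      ∑ S, sampleWeight G p S * (if (G.induce S).core.cls ∈ A then 1 else 0) -
        ∑ S, sampleWeight G q S * (if (G.induce S).core.cls ∈ A then 1 else 0) := by
  simp_rw [pSampleLaw, Finset.powerset_univ, ← Finset.sum_sub_distrib, ← sub_mul]
  exact tsum_subtype_sum_mul_ite_eq _ _ A

theorem sum_sampleWeight_mul_eq_sum_prod {r : ℝ} (hr : r ≤ 1) {κ : Type*} [Fintype κ]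
    (v : κ → ℝ) (hv : ∑ k, v k = 1) (P : κ → Prop) [DecidablePred P]
    (hP : ∑ k with P k, v k = r) (F : Finset (Fin G.n) → ℝ) :
    ∑ S, sampleWeight G r S * F S = ∑ σ : Fin G.n → κ, (∏ i, v (σ i)) * F {i | P (σ i)} := by
  rw [sum_prod_mul_filter v hv P F, hP, Fintype.card_fin]
  simp only [sampleWeight, min_eq_left hr]

theorem ite_cls_ne_le_sum_darts (hG : G.Loopless) (σ : Fin G.n → Fin 3) :
    (if (G.induce {i | σ i ≠ 0}).core.cls ≠ (G.induce {i | σ i = 1}).core.cls then 1 else 0 : ℝ)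
      ≤ ∑ z ∈ G.darts, if σ z.1 = 2 ∧ σ z.2 ≠ 0 then 1 else 0 := by
  by_cases hbad : ∃ z ∈ G.darts, σ z.1 = 2 ∧ σ z.2 ≠ 0
  · obtain ⟨z, hz, hσz⟩ := hbad
    calc (if _ then 1 else 0 : ℝ) ≤ 1 := by split_ifs <;> norm_num
      _ ≤ _ := by
        simpa [hσz] using Finset.single_le_sum
          (f := fun z : Fin G.n × Fin G.n => if σ z.1 = 2 ∧ σ z.2 ≠ 0 then (1 : ℝ) else 0)
          (fun _ _ => by positivity) hz
  · push Not at hbad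
    have hlabel : ∀ k : Fin 3, k ≠ 0 → k ≠ 1 → k = 2 := by decide
    rw [G.cls_core_induce_eq_of_subset (S := {i | σ i ≠ 0}) (T := {i | σ i = 1})
      (fun u => by simp +contextual) fun u hu huT w hw => ?_]
    · simp only [ne_eq, not_true_eq_false, if_false]
      exact Finset.sum_nonneg fun _ _ => by positivity
    · simp only [Finset.mem_filter, Finset.mem_univ, true_and] at hu huT hw
      by_contra hadj
      have huw : u ≠ w := by rintro rfl; simp [hG u] at hadj
      exact hw (hbad (u, w) (by simpa [FinGraph.darts, huw] using hadj) (hlabel _ hu huT))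

theorem dTV_pSampleLaw_le (hG : G.Loopless) {p q : ℝ} (hq : 0 ≤ q) (hqp : q ≤ p)
    (hp1 : p ≤ 1) :
    dTV (pSampleLaw G p) (pSampleLaw G q) ≤ 2 * (G.e : ℝ) * p * (p - q) := by
  set v : Fin 3 → ℝ := ![1 - p, q, p - q]
  have hv : ∑ k, v k = 1 := by simp [v, Fin.sum_univ_three]
  have hv0 : ∀ k, 0 ≤ v k := by
    intro k
    fin_cases k <;> simp [v] <;> linarith
  have hvp : ∑ k with k ≠ 0, v k = p := by simp [v, Finset.sum_filter, Fin.sum_univ_three]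
  have hvq : ∑ k with k = 1, v k = q := by simp [v, Finset.sum_filter]
  have hvpq : ∑ k with k = 2, v k = p - q := by simp [v, Finset.sum_filter]
  refine ciSup_le fun A => ?_
  rw [tsum_pSampleLaw_sub, sum_sampleWeight_mul_eq_sum_prod G hp1 v hv _ hvp,
    sum_sampleWeight_mul_eq_sum_prod G (hqp.trans hp1) v hv _ hvq]
  calc _ ≤ ∑ σ : Fin G.n → Fin 3, (∏ i, v (σ i)) *
          (if (G.induce {i | σ i ≠ 0}).core.cls ≠ (G.induce {i | σ i = 1}).core.cls
            then 1 else 0) :=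
        abs_sum_sub_le_sum_ne (fun σ => Finset.prod_nonneg fun i _ => hv0 _) _ _ A
    _ ≤ ∑ σ : Fin G.n → Fin 3, (∏ i, v (σ i)) *
          ∑ z ∈ G.darts, if σ z.1 = 2 ∧ σ z.2 ≠ 0 then 1 else 0 :=
        Finset.sum_le_sum fun σ _ => mul_le_mul_of_nonneg_left
          (ite_cls_ne_le_sum_darts G hG σ) (Finset.prod_nonneg fun i _ => hv0 _)
    _ = ∑ z ∈ G.darts, ∑ σ : Fin G.n → Fin 3,
          (∏ i, v (σ i)) * if σ z.1 = 2 ∧ σ z.2 ≠ 0 then 1 else 0 := by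
        simp_rw [Finset.mul_sum]
        exact Finset.sum_comm
    _ = ∑ z ∈ G.darts, (p - q) * p := by
        refine Finset.sum_congr rfl fun z hz => ?_
        rw [sum_prod_mul_ite_and v hv (Finset.mem_filter.1 hz).2.2 (· = 2) (· ≠ 0), hvpq, hvp]
    _ = 2 * (G.e : ℝ) * p * (p - q) := by
        rw [Finset.sum_const, G.card_darts, nsmul_eq_mul]
        push_cast
        ring

end Coupling

theorem max_div_sub_one_div_sub_one {p q : ℝ} (hq : 0 < q) (hqp : q ≤ p) :
    max (p / q - 1) (q / p - 1) = p / q - 1 := by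
  have hp : 0 < p := hq.trans_le hqp
  refine max_eq_left (sub_le_sub_right ?_ 1)
  exact ((div_le_one hp).2 hqp).trans ((one_le_div hq).2 hqp)

/-- For a finite loopless graph `G` with `e` edges and `0 < q ≤ p ≤ 1`,
`d_TV(law of S_p(G), law of S_q(G)) ≤ 2·e·p·(p − q)`; equivalently, for `p, q ∈ (0,1]`
the distance is at most `2·p·q·e·max(p/q − 1, q/p − 1)`. -/
theorem stmt9 (G : FinGraph) (hG : G.Loopless) :
    (∀ p q : ℝ, 0 < q → q ≤ p → p ≤ 1 →
      dTV (pSampleLaw G p) (pSampleLaw G q) ≤ 2 * (G.e : ℝ) * p * (p - q)) ∧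
    (∀ p q : ℝ, 0 < p → p ≤ 1 → 0 < q → q ≤ 1 →
      dTV (pSampleLaw G p) (pSampleLaw G q) ≤
        2 * p * q * (G.e : ℝ) * max (p / q - 1) (q / p - 1)) := by
  refine ⟨fun p q hq hqp hp1 => dTV_pSampleLaw_le G hG hq.le hqp hp1,
    fun p q hp hp1 hq hq1 => ?_⟩
  rcases le_total q p with hqp | hpq
  · rw [max_div_sub_one_div_sub_one hq hqp]
    convert dTV_pSampleLaw_le G hG hq.le hqp hp1 using 1
    field_simp
  · rw [max_comm, max_div_sub_one_div_sub_one hp hpq, dTV_comm]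
    convert dTV_pSampleLaw_le G hG hp.le hpq hq1 using 1
    field_simp
end

section
/- For any finite graph G with e(G) ≥ 1 non-loop edges and any k > 0, (1/e(G))·∑_i d_i·1[d_i > k√(e(G))] ≤ (2√2/k)·(d²̄(G)/d̄(G)²)·√(ρ(G)). Consequently, if (G_j) is a sequence of finite graphs with e(G_j) → ∞ and (d²̄(G_j)/d̄(G_j)²)·√(ρ(G_j)) → 0 as j → ∞, then (G_j) is uniformly sampling regular. -/
open Filter Finset
open scoped Classical ENNReal

/-
Markov's inequality for the degree sequence: a vertex with `d_i > k √e` satisfies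
`d_i ≤ d_i² / (k √e)`, so the tail sum is at most `∑ d_i² / (k √e)`. By the handshake lemma
`d̄ = 2e/n`, and `√ρ = √2 √e / n`, which turns the right-hand side of the bound into exactly
`∑ d_i² / (k e √e)`. For the sequential statement a bound `C` on `(d²̄/d̄²) √ρ` suffices: take
`k = 2√2 (C + 1) / ε`.
-/

theorem sum_ite_lt_le_sum_sq_div {ι : Type*} (s : Finset ι) (f : ι → ℝ) {t : ℝ} (ht : 0 < t) :
    ∑ i ∈ s, (if t < f i then f i else 0) ≤ (∑ i ∈ s, f i ^ 2) / t := by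
  rw [Finset.sum_div]
  refine Finset.sum_le_sum fun i _ => ?_
  split_ifs with h
  · rw [le_div_iff₀ ht, sq]
    exact mul_le_mul_of_nonneg_left h.le (ht.trans h).le
  · positivity

namespace FinGraph

theorem sum_deg_eq_two_mul_e (G : FinGraph) : ∑ i, G.deg i = 2 * G.e := by
  have he : G.e = ∑ i, ∑ j, if G.adj i j = true ∧ i < j then 1 else 0 := by
    rw [e, card_filter, Fintype.sum_prod_type]
  have hdeg : ∀ i, G.deg i = ∑ j, ((if G.adj i j = true ∧ i < j then 1 else 0) +
      if G.adj j i = true ∧ j < i then 1 else 0) := by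
    intro i
    rw [deg, card_filter]
    refine sum_congr rfl fun j _ => ?_
    rw [G.symm j i]
    rcases lt_trichotomy i j with h | rfl | h
    · simp [h, h.ne', h.not_gt]
    · simp
    · simp [h, h.ne, h.not_gt]
  simp_rw [hdeg, sum_add_distrib]
  rw [sum_comm (f := fun i j => if G.adj j i = true ∧ j < i then 1 else 0), ← he]
  ring

theorem two_mul_sqrt_two_mul_sqAvgDeg_div_avgDeg_sq_mul_sqrt_density (G : FinGraph)
    (he : 0 < G.e) :
    2 * Real.sqrt 2 * (G.sqAvgDeg / G.avgDeg ^ 2) * Real.sqrt G.density =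
      (∑ i, (G.deg i : ℝ) ^ 2) / (G.e * Real.sqrt G.e) := by
  have hsum : ∑ i, (G.deg i : ℝ) = 2 * G.e := by exact_mod_cast G.sum_deg_eq_two_mul_e
  have hn : (0 : ℝ) < G.n := by
    obtain ⟨q, -⟩ := card_pos.mp he
    exact_mod_cast q.1.pos
  have heR : (0 : ℝ) < G.e := by exact_mod_cast he
  have hρ : Real.sqrt G.density = Real.sqrt 2 * Real.sqrt G.e / G.n := by
    rw [density, Real.sqrt_div' _ (by positivity), Real.sqrt_sq hn.le, Real.sqrt_mul zero_le_two]
  have hs2 : Real.sqrt 2 ^ 2 = 2 := Real.sq_sqrt zero_le_two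
  have hse : Real.sqrt G.e ^ 2 = G.e := Real.sq_sqrt heR.le
  rw [hρ, sqAvgDeg, avgDeg, hsum]
  field_simp
  rw [hs2, hse]

theorem one_div_e_mul_tailDegSum_le (G : FinGraph) (he : 0 < G.e) {k : ℝ} (hk : 0 < k) :
    1 / (G.e : ℝ) * tailDegSum G k ≤
      2 * Real.sqrt 2 / k * (G.sqAvgDeg / G.avgDeg ^ 2) * Real.sqrt G.density := by
  have heR : (0 : ℝ) < G.e := by exact_mod_cast he
  have hse0 : 0 < Real.sqrt G.e := Real.sqrt_pos.mpr heR
  calc 1 / (G.e : ℝ) * tailDegSum G k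
      ≤ 1 / (G.e : ℝ) * ((∑ i, (G.deg i : ℝ) ^ 2) / (k * Real.sqrt G.e)) :=
        mul_le_mul_of_nonneg_left (sum_ite_lt_le_sum_sq_div _ _ (by positivity)) (by positivity)
    _ = 1 / k * (2 * Real.sqrt 2 * (G.sqAvgDeg / G.avgDeg ^ 2) * Real.sqrt G.density) := by
        rw [two_mul_sqrt_two_mul_sqAvgDeg_div_avgDeg_sq_mul_sqrt_density G he]
        field_simp
    _ = _ := by ring

end FinGraph

theorem uniformlySamplingRegular_of_bddAbove (G : ℕ → FinGraph)
    (hG : BddAbove (Set.range fun j => (G j).sqAvgDeg / (G j).avgDeg ^ 2 *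
      Real.sqrt (G j).density)) :
    UniformlySamplingRegular G := by
  obtain ⟨C, hC⟩ := hG
  intro ε hε
  set c := max C 0 + 1
  have hc : 0 < c := by positivity
  refine ⟨2 * Real.sqrt 2 * c / ε, by positivity, fun j => ?_⟩
  rcases Nat.eq_zero_or_pos (G j).e with he | he
  · -- junk value: `1 / 0 = 0` in `ℝ`
    simpa [he] using hε
  calc 1 / ((G j).e : ℝ) * tailDegSum (G j) (2 * Real.sqrt 2 * c / ε)
      ≤ 2 * Real.sqrt 2 / (2 * Real.sqrt 2 * c / ε) * ((G j).sqAvgDeg / (G j).avgDeg ^ 2) *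
          Real.sqrt (G j).density :=
        (G j).one_div_e_mul_tailDegSum_le he (by positivity)
    _ = ε / c * ((G j).sqAvgDeg / (G j).avgDeg ^ 2 * Real.sqrt (G j).density) := by
        field_simp
    _ ≤ ε / c * (c - 1) :=
        mul_le_mul_of_nonneg_left (by simpa [c] using (hC ⟨j, rfl⟩).trans (le_max_left C 0))
          (by positivity)
    _ < ε := by
        rw [div_mul_eq_mul_div, div_lt_iff₀ hc]
        linarith

/-- For any finite graph `G` with `e(G) ≥ 1` and any `k > 0`,
`(1/e(G))·∑_i d_i·1[d_i > k√(e(G))] ≤ (2√2/k)·(d²̄(G)/d̄(G)²)·√(ρ(G))`. Consequently, a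
sequence of finite graphs with `e(G_j) → ∞` and `(d²̄(G_j)/d̄(G_j)²)·√(ρ(G_j)) → 0` is
uniformly sampling regular. -/
theorem stmt10 :
    (∀ G : FinGraph, 1 ≤ G.e → ∀ k : ℝ, 0 < k →
      (1 / (G.e : ℝ)) * tailDegSum G k ≤
        (2 * Real.sqrt 2 / k) * (G.sqAvgDeg / G.avgDeg ^ 2) * Real.sqrt G.density) ∧
    (∀ G : ℕ → FinGraph,
      Tendsto (fun j => ((G j).e : ℝ)) atTop atTop →
      Tendsto (fun j => ((G j).sqAvgDeg / (G j).avgDeg ^ 2) * Real.sqrt ((G j).density))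
        atTop (nhds 0) →
      UniformlySamplingRegular G) :=
  ⟨fun G he _ hk => G.one_div_e_mul_tailDegSum_le he hk,
    fun G _ hG => uniformlySamplingRegular_of_bddAbove G hG.bddAbove_range⟩
end
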